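/- arXiv:2008.08734 — 7 statements merged into one kernel-verified Lean document; each statement's English description precedes it below -/
import Mathlib

section
/- Let A, C ∈ ℝ^{n×n} and let W ∈ ℝ^{n×n} be symmetric positive semidefinite. For a symmetric positive semidefinite matrix X₀ define the sequence X_{k+1} = A X_k Aᵀ + C X_k Cᵀ + W. Then there exists a symmetric positive semidefinite matrix X such that, for every symmetric positive semidefinite initial matrix X₀, the sequence (X_k) converges to X (in particular the limit is independent of X₀), if and only if the spectral radius of A⊗A + C⊗C is strictly less than 1. -/
open Matrix Kronecker Filter Topology

/-- The spectral radius of a real square matrix: the maximum modulus of its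
complex eigenvalues. -/
noncomputable def specRad {ι : Type*} [Fintype ι] [DecidableEq ι]
    (M : Matrix ι ι ℝ) : ℝ :=
  sSup ((fun μ : ℂ => ‖μ‖) '' spectrum ℂ (M.map Complex.ofReal))

/-- The sequence `X_{k+1} = A X_k Aᵀ + C X_k Cᵀ + W` starting from `X₀`. -/
noncomputable def lyapSeq {n : ℕ} (A C W X0 : Matrix (Fin n) (Fin n) ℝ) :
    ℕ → Matrix (Fin n) (Fin n) ℝ
  | 0 => X0
  | k + 1 => A * lyapSeq A C W X0 k * Aᵀ + C * lyapSeq A C W X0 k * Cᵀ + W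

/-!
Put `L X = A X Aᵀ + C X Cᵀ`, so that the iteration is `X ↦ L X + W`, and `vec (L X) = T vec X`
with `T = A ⊗ A + C ⊗ C`. By Gelfand's formula `ρ(T) < 1` iff `T ^ k → 0`, i.e. iff `L ^ k → 0`
pointwise. In that case `1 - L` is injective, hence invertible, and its fixed point `X = L X + W`
attracts every orbit; `X` is positive semidefinite as the limit of the iterates from `0`.
Conversely, convergence from `1` and from `0` to the same limit gives `L ^ k 1 → 0`, and this
controls `L ^ k Y` for every matrix unit `Y` by a Cauchy–Schwarz domination that `L` preserves.
-/

section BanachAlgebra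

variable {A : Type*} [NormedRing A] [CompleteSpace A]

theorem tendsto_pow_nhds_zero_of_spectralRadius_lt_one [NormedAlgebra ℂ A] {a : A}
    (h : spectralRadius ℂ a < 1) : Tendsto (a ^ ·) atTop (𝓝 0) := by
  obtain ⟨r, hρr, hr1⟩ := ENNReal.lt_iff_exists_nnreal_btwn.mp h
  have hr1 : r < 1 := by exact_mod_cast hr1
  have hgelfand := spectrum.pow_nnnorm_pow_one_div_tendsto_nhds_spectralRadius a
  have hbound : ∀ᶠ k : ℕ in atTop, ‖a ^ k‖ ≤ (r : ℝ) ^ k := by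
    filter_upwards [hgelfand.eventually_lt_const hρr, eventually_ge_atTop 1] with k hk hk1
    have hk0 : (0 : ℝ) < k := by exact_mod_cast hk1
    rw [one_div, ENNReal.rpow_inv_lt_iff hk0, ENNReal.rpow_natCast] at hk
    exact_mod_cast hk.le
  exact squeeze_zero_norm' hbound (tendsto_pow_atTop_nhds_zero_of_lt_one r.2 hr1)

theorem spectrum.norm_lt_one_of_tendsto_pow {𝕜 : Type*} [NormedField 𝕜] [NormedAlgebra 𝕜 A]
    {a : A} (h : Tendsto (a ^ ·) atTop (𝓝 0)) {μ : 𝕜} (hμ : μ ∈ spectrum 𝕜 a) : ‖μ‖ < 1 := by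
  have hnorm : Tendsto (fun k => ‖a ^ k‖ * ‖(1 : A)‖) atTop (𝓝 0) := by
    simpa using h.norm.mul_const ‖(1 : A)‖
  obtain ⟨k, hk, hk1⟩ :=
    ((hnorm.eventually_lt_const zero_lt_one).and (eventually_ge_atTop 1)).exists
  rw [← pow_lt_one_iff_of_nonneg (norm_nonneg μ) (by omega : k ≠ 0), ← norm_pow]
  exact (spectrum.norm_le_norm_mul_of_mem (spectrum.pow_mem_pow a k hμ)).trans_lt hk

end BanachAlgebra

theorem Matrix.tendsto_nhds_iff {m n R α : Type*} [TopologicalSpace R] {l : Filter α}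
    {f : α → Matrix m n R} {M : Matrix m n R} :
    Tendsto f l (𝓝 M) ↔ ∀ i j, Tendsto (fun k => f k i j) l (𝓝 (M i j)) :=
  tendsto_pi_nhds.trans (forall_congr' fun _ => tendsto_pi_nhds)

theorem Matrix.tendsto_map_ofReal_iff {m n α : Type*} {l : Filter α} {f : α → Matrix m n ℝ} :
    Tendsto (fun k => (f k).map Complex.ofReal) l (𝓝 0) ↔ Tendsto f l (𝓝 0) := by
  refine ⟨fun h => ?_, fun h => ?_⟩
  · simpa [Function.comp_def, Matrix.map_map] using
      ((continuous_id.matrix_map Complex.continuous_re).tendsto 0).comp h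
  · simpa [Function.comp_def] using
      ((continuous_id.matrix_map Complex.continuous_ofReal).tendsto 0).comp h

theorem Matrix.isClosed_setOf_posSemidef {n : Type*} [Fintype n] :
    IsClosed {M : Matrix n n ℝ | M.PosSemidef} := by
  simp only [posSemidef_iff_dotProduct_mulVec, Set.ofPred_and, Set.ofPred_forall]
  exact (isClosed_eq (by fun_prop) continuous_id).inter
    (isClosed_iInter fun _ => isClosed_le continuous_const (by fun_prop))

section SpecRad

variable {ι : Type*} [Fintype ι] [DecidableEq ι]

theorem norm_le_specRad {M : Matrix ι ι ℝ} {μ : ℂ} (hμ : μ ∈ spectrum ℂ (M.map Complex.ofReal)) :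
    ‖μ‖ ≤ specRad M :=
  le_csSup ((Matrix.finite_spectrum _).image _).bddAbove ⟨μ, hμ, rfl⟩

theorem specRad_lt_one_iff (M : Matrix ι ι ℝ) :
    specRad M < 1 ↔ ∀ μ ∈ spectrum ℂ (M.map Complex.ofReal), ‖μ‖ < 1 := by
  refine ⟨fun h μ hμ => (norm_le_specRad hμ).trans_lt h, fun h => ?_⟩
  rcases ((fun μ : ℂ => ‖μ‖) '' spectrum ℂ (M.map Complex.ofReal)).eq_empty_or_nonempty with
    hS | hS
  · rw [specRad, hS, Real.sSup_empty]
    exact zero_lt_one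
  · rw [specRad, ((Matrix.finite_spectrum _).image _).csSup_lt_iff hS]
    rintro _ ⟨μ, hμ, rfl⟩
    exact h μ hμ

attribute [local instance] Matrix.linftyOpNormedRing Matrix.linftyOpNormedAlgebra in
theorem specRad_lt_one_iff_tendsto_pow (M : Matrix ι ι ℝ) :
    specRad M < 1 ↔ Tendsto (M ^ ·) atTop (𝓝 0) := by
  have hpow (k : ℕ) : (M ^ k).map Complex.ofReal = M.map Complex.ofReal ^ k :=
    Matrix.map_pow M Complex.ofRealHom k
  rw [← Matrix.tendsto_map_ofReal_iff]
  simp only [hpow]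
  refine ⟨fun h => tendsto_pow_nhds_zero_of_spectralRadius_lt_one ?_, fun h => ?_⟩
  · refine lt_of_le_of_lt (iSup₂_le fun μ hμ => ?_) (ENNReal.ofReal_lt_one.mpr h)
    rw [← ENNReal.ofReal_coe_nnreal, coe_nnnorm]
    exact ENNReal.ofReal_le_ofReal (norm_le_specRad hμ)
  · exact (specRad_lt_one_iff M).mpr fun μ hμ => spectrum.norm_lt_one_of_tendsto_pow h hμ

end SpecRad

section AffineIteration

variable {R E : Type*} [Semiring R] [AddCommGroup E] [Module R E]

theorem iterate_add_const_sub_iterate (L : Module.End R E) (W x y : E) (k : ℕ) :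
    (fun z => L z + W)^[k] x - (fun z => L z + W)^[k] y = (L ^ k) (x - y) := by
  induction k with
  | zero => simp
  | succ k ih =>
    rw [Function.iterate_succ_apply', Function.iterate_succ_apply', pow_succ',
      Module.End.mul_apply, ← ih, map_sub]
    abel

theorem tendsto_iterate_add_const [TopologicalSpace E] [ContinuousAdd E] {L : Module.End R E}
    (hL : ∀ Y, Tendsto (fun k => (L ^ k) Y) atTop (𝓝 0)) {W X : E} (hX : L X + W = X) (x : E) :
    Tendsto (fun k => (fun z => L z + W)^[k] x) atTop (𝓝 X) := by
  have h := (hL (x - X)).add_const X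
  rw [zero_add] at h
  refine h.congr fun k => ?_
  rw [← iterate_add_const_sub_iterate L W, Function.iterate_fixed (f := fun z => L z + W) hX,
    sub_add_cancel]

end AffineIteration

theorem exists_add_eq_self_of_tendsto_pow {K E : Type*} [Field K] [AddCommGroup E] [Module K E]
    [FiniteDimensional K E] [TopologicalSpace E] [T2Space E] {L : Module.End K E}
    (hL : ∀ Y, Tendsto (fun k => (L ^ k) Y) atTop (𝓝 0)) (W : E) : ∃ X, L X + W = X := by
  have hinj : Function.Injective (1 - L : Module.End K E) := by
    refine (injective_iff_map_eq_zero _).mpr fun Y hY => ?_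
    have hfix : L Y = Y := (sub_eq_zero.mp hY).symm
    have hconst : (fun k => (L ^ k) Y) = fun _ => Y :=
      funext fun k => by rw [Module.End.pow_apply, Function.iterate_fixed hfix]
    exact tendsto_nhds_unique (hconst ▸ tendsto_const_nhds) (hL Y)
  obtain ⟨X, hX⟩ := LinearMap.injective_iff_surjective.mp hinj W
  exact ⟨X, by rw [← hX]; simp⟩

section Lyapunov

variable {ι : Type*} [Fintype ι]

def lyapOp (A C : Matrix ι ι ℝ) : Module.End ℝ (Matrix ι ι ℝ) where
  toFun X := A * X * Aᵀ + C * X * Cᵀ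
  map_add' X Y := by simp only [mul_add, add_mul]; abel
  map_smul' c X := by simp only [mul_smul_comm, smul_mul_assoc, smul_add, RingHom.id_apply]

@[simp]
theorem lyapOp_apply (A C X : Matrix ι ι ℝ) : lyapOp A C X = A * X * Aᵀ + C * X * Cᵀ := rfl

theorem lyapSeq_eq_iterate {n : ℕ} (A C W X0 : Matrix (Fin n) (Fin n) ℝ) :
    lyapSeq A C W X0 = fun k => (fun X => lyapOp A C X + W)^[k] X0 := by
  funext k
  induction k with
  | zero => rfl
  | succ k ih => rw [Function.iterate_succ_apply', ← ih]; rfl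

variable {A C : Matrix ι ι ℝ}

theorem Matrix.PosSemidef.lyapOp {X : Matrix ι ι ℝ} (hX : X.PosSemidef) :
    (_root_.lyapOp A C X).PosSemidef := by
  simpa using (hX.mul_mul_conjTranspose_same A).add (hX.mul_mul_conjTranspose_same C)

theorem Matrix.PosSemidef.lyapOp_pow {X : Matrix ι ι ℝ} (hX : X.PosSemidef) (k : ℕ) :
    ((_root_.lyapOp A C ^ k) X).PosSemidef := by
  induction k with
  | zero => exact hX
  | succ k ih => rw [pow_succ', Module.End.mul_apply]; exact ih.lyapOp

theorem lyapSeq_posSemidef {n : ℕ} {A C W X0 : Matrix (Fin n) (Fin n) ℝ} (hW : W.PosSemidef)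
    (hX0 : X0.PosSemidef) (k : ℕ) : (lyapSeq A C W X0 k).PosSemidef := by
  induction k with
  | zero => exact hX0
  | succ k ih => exact ih.lyapOp.add hW

theorem dotProduct_lyapOp_mulVec (M : Matrix ι ι ℝ) (x y : ι → ℝ) :
    x ⬝ᵥ lyapOp A C M *ᵥ y = (Aᵀ *ᵥ x) ⬝ᵥ M *ᵥ (Aᵀ *ᵥ y) + (Cᵀ *ᵥ x) ⬝ᵥ M *ᵥ (Cᵀ *ᵥ y) := by
  simp only [lyapOp_apply, add_mulVec, dotProduct_add, ← mulVec_mulVec, dotProduct_mulVec x,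
    mulVec_transpose]

theorem kronecker_add_mulVec_vec (X : Matrix ι ι ℝ) :
    (A ⊗ₖ A + C ⊗ₖ C) *ᵥ vec X = vec (lyapOp A C X) := by
  rw [add_mulVec, kronecker_mulVec_vec, kronecker_mulVec_vec, lyapOp_apply, vec_add]

theorem tendsto_apply_of_tendsto_single {E : Type*} [AddCommMonoid E] [Module ℝ E]
    [TopologicalSpace E] [ContinuousAdd E] [ContinuousSMul ℝ E] [DecidableEq ι]
    {f : ℕ → Matrix ι ι ℝ →ₗ[ℝ] E}
    (h : ∀ i j, Tendsto (fun k => f k (single i j 1)) atTop (𝓝 0)) (Y : Matrix ι ι ℝ) :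
    Tendsto (fun k => f k Y) atTop (𝓝 0) := by
  have hY : Y = ∑ i, ∑ j, Y i j • single i j 1 := by
    conv_lhs => rw [matrix_eq_sum_single Y]
    simp [smul_single]
  rw [hY]
  simp only [map_sum, map_smul]
  simpa using tendsto_finsetSum _ fun i _ =>
    tendsto_finsetSum _ fun j _ => (h i j).const_smul (Y i j)

section KroneckerSum

variable [DecidableEq ι]

theorem kronecker_add_pow_mulVec_vec (X : Matrix ι ι ℝ) (k : ℕ) :
    (A ⊗ₖ A + C ⊗ₖ C) ^ k *ᵥ vec X = vec ((lyapOp A C ^ k) X) := by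
  induction k with
  | zero => simp
  | succ k ih =>
    rw [pow_succ', ← mulVec_mulVec, ih, kronecker_add_mulVec_vec, pow_succ',
      Module.End.mul_apply]

-- `vec` stacks columns, hence the transposed index pairs.
theorem kronecker_add_pow_apply (k : ℕ) (a b i j : ι) :
    ((A ⊗ₖ A + C ⊗ₖ C) ^ k) (b, a) (j, i) = (lyapOp A C ^ k) (single i j 1) a b := by
  have h := congrFun (kronecker_add_pow_mulVec_vec (A := A) (C := C) (single i j 1) k) (b, a)
  rwa [vec_single, mulVec_single_one] at h

theorem tendsto_kronecker_add_pow_iff :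
    Tendsto ((A ⊗ₖ A + C ⊗ₖ C) ^ ·) atTop (𝓝 0) ↔
      ∀ i j, Tendsto (fun k => (lyapOp A C ^ k) (single i j 1)) atTop (𝓝 0) := by
  simp only [Matrix.tendsto_nhds_iff, Prod.forall, kronecker_add_pow_apply, Matrix.zero_apply]
  exact ⟨fun h i j a b => h b a j i, fun h b a j i => h i j a b⟩

end KroneckerSum

theorem Real.sqrt_mul_sqrt_add_sqrt_mul_sqrt_le {a b c d : ℝ} (ha : 0 ≤ a) (hb : 0 ≤ b)
    (hc : 0 ≤ c) (hd : 0 ≤ d) : √a * √b + √c * √d ≤ √(a + c) * √(b + d) := by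
  rw [← Real.sqrt_mul (add_nonneg ha hc)]
  apply Real.le_sqrt_of_sq_le
  nlinarith [sq_nonneg (√a * √d - √c * √b), Real.sq_sqrt ha, Real.sq_sqrt hb, Real.sq_sqrt hc,
    Real.sq_sqrt hd]

theorem abs_le_sqrt_dotProduct_self (x : ι → ℝ) (i : ι) : |x i| ≤ √(x ⬝ᵥ x) :=
  Real.abs_le_sqrt <| (sq (x i)).trans_le <|
    Finset.single_le_sum (f := fun j => x j * x j) (fun _ _ => mul_self_nonneg _)
      (Finset.mem_univ i)

/-- `L ^ k 1 → 0` controls the symmetric matrices, as differences of positive semidefinite ones,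
but not the antisymmetric ones; this domination, which `lyapOp` preserves, controls all of them. -/
def FormDominated (P Y : Matrix ι ι ℝ) : Prop :=
  ∀ x y : ι → ℝ, |x ⬝ᵥ Y *ᵥ y| ≤ √(x ⬝ᵥ P *ᵥ x) * √(y ⬝ᵥ P *ᵥ y)

theorem formDominated_one_single [DecidableEq ι] (i j : ι) :
    FormDominated 1 (single i j (1 : ℝ)) := by
  intro x y
  rw [one_mulVec, one_mulVec, single_mulVec, ← Pi.single, dotProduct_single, one_mul, abs_mul]
  exact mul_le_mul (abs_le_sqrt_dotProduct_self x i) (abs_le_sqrt_dotProduct_self y j)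
    (abs_nonneg _) (Real.sqrt_nonneg _)

namespace FormDominated

variable {P Y : Matrix ι ι ℝ}

theorem lyapOp (h : FormDominated P Y) (hP : P.PosSemidef) :
    FormDominated (_root_.lyapOp A C P) (_root_.lyapOp A C Y) := by
  have hq (z : ι → ℝ) : 0 ≤ z ⬝ᵥ P *ᵥ z := by simpa using hP.dotProduct_mulVec_nonneg z
  intro x y
  simp only [dotProduct_lyapOp_mulVec]
  calc _ ≤ _ := abs_add_le _ _
    _ ≤ _ := add_le_add (h _ _) (h _ _)
    _ ≤ _ := Real.sqrt_mul_sqrt_add_sqrt_mul_sqrt_le (hq _) (hq _) (hq _) (hq _)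

theorem lyapOp_pow (h : FormDominated P Y) (hP : P.PosSemidef) (k : ℕ) :
    FormDominated ((_root_.lyapOp A C ^ k) P) ((_root_.lyapOp A C ^ k) Y) := by
  induction k with
  | zero => exact h
  | succ k ih =>
    simp only [pow_succ', Module.End.mul_apply]
    exact ih.lyapOp (hP.lyapOp_pow k)

theorem abs_apply_le (h : FormDominated P Y) (a b : ι) :
    |Y a b| ≤ √(P a a) * √(P b b) := by
  classical
  simpa using h (Pi.single a 1) (Pi.single b 1)

end FormDominated

theorem tendsto_nhds_zero_of_formDominated {P Y : ℕ → Matrix ι ι ℝ}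
    (h : ∀ k, FormDominated (P k) (Y k)) (hP : Tendsto P atTop (𝓝 0)) :
    Tendsto Y atTop (𝓝 0) := by
  rw [Matrix.tendsto_nhds_iff] at hP ⊢
  intro a b
  refine squeeze_zero_norm (fun k => (h k).abs_apply_le a b) ?_
  simpa using (hP a a).sqrt.mul (hP b b).sqrt

theorem tendsto_lyapOp_pow_single_of_tendsto_one [DecidableEq ι]
    (h : Tendsto (fun k => (lyapOp A C ^ k) 1) atTop (𝓝 0)) (i j : ι) :
    Tendsto (fun k => (lyapOp A C ^ k) (single i j 1)) atTop (𝓝 0) :=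
  tendsto_nhds_zero_of_formDominated
    (fun k => (formDominated_one_single i j).lyapOp_pow PosSemidef.one k) h

end Lyapunov

theorem stmt0 {n : ℕ} (A C W : Matrix (Fin n) (Fin n) ℝ) (hW : W.PosSemidef) :
    (∃ X : Matrix (Fin n) (Fin n) ℝ, X.PosSemidef ∧
      ∀ X0 : Matrix (Fin n) (Fin n) ℝ, X0.PosSemidef →
        Tendsto (lyapSeq A C W X0) atTop (𝓝 X)) ↔
    specRad (A ⊗ₖ A + C ⊗ₖ C) < 1 := by
  rw [specRad_lt_one_iff_tendsto_pow, tendsto_kronecker_add_pow_iff]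
  constructor
  · rintro ⟨X, -, hconv⟩
    have hone := (hconv 1 PosSemidef.one).sub (hconv 0 PosSemidef.zero)
    simp only [lyapSeq_eq_iterate, iterate_add_const_sub_iterate, sub_zero, sub_self] at hone
    exact tendsto_lyapOp_pow_single_of_tendsto_one hone
  · intro h
    have hL := tendsto_apply_of_tendsto_single (f := fun k => lyapOp A C ^ k) h
    obtain ⟨X, hX⟩ := exists_add_eq_self_of_tendsto_pow hL W
    have hconv (X0 : Matrix (Fin n) (Fin n) ℝ) : Tendsto (lyapSeq A C W X0) atTop (𝓝 X) := by
      rw [lyapSeq_eq_iterate]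
      exact tendsto_iterate_add_const hL hX X0
    refine ⟨X, isClosed_setOf_posSemidef.mem_of_tendsto (hconv 0) ?_, fun X0 _ => hconv X0⟩
    exact .of_forall (lyapSeq_posSemidef hW PosSemidef.zero)
end

section
/- Let A, C ∈ ℝ^{n×n}, B, D ∈ ℝ^{n×m}, let R ∈ ℝ^{m×m} be symmetric positive definite, let P ∈ ℝ^{n×n} be symmetric positive semidefinite, and let γ ≥ 0. Define L₁ = −(R + γBᵀPB + γDᵀPD)⁻¹(γBᵀPA + γDᵀPC). Then for every L ∈ ℝ^{m×n}, the matrix [γ(A+BL)ᵀP(A+BL) + γ(C+DL)ᵀP(C+DL) + LᵀRL] − [γ(A+BL₁)ᵀP(A+BL₁) + γ(C+DL₁)ᵀP(C+DL₁) + L₁ᵀRL₁] is positive semidefinite; that is, the policy-improvement gain L₁ minimizes the one-step Lyapunov operator in the Loewner order. -/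
/-!
Writing `G = R + γBᵀPB + γDᵀPD` and `W = γBᵀPA + γDᵀPC`, the one-step cost of a gain `L` is
`γAᵀPA + γCᵀPC + LᵀGL + LᵀW + WᵀL`, a quadratic in `L`. The gain `L₁ = -G⁻¹W` solves
`GL₁ = -W`, so completing the square gives `cost L - cost L₁ = (L - L₁)ᵀG(L - L₁)`, which is
positive semidefinite because `G` is positive definite.
-/

open Matrix

namespace Matrix

variable {m n : Type*} [Fintype m] {α : Type*} [CommRing α]

theorem quadratic_sub_eq_of_mul_eq_neg {G : Matrix m m α} (hG : Gᵀ = G)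
    {W L₀ : Matrix m n α} (hL₀ : G * L₀ = -W) (L : Matrix m n α) :
    (Lᵀ * G * L + Lᵀ * W + Wᵀ * L) - (L₀ᵀ * G * L₀ + L₀ᵀ * W + Wᵀ * L₀) =
      (L - L₀)ᵀ * G * (L - L₀) := by
  have hW : W = -(G * L₀) := by rw [hL₀, neg_neg]
  subst hW
  simp only [transpose_neg, transpose_mul, hG, transpose_sub, Matrix.sub_mul, Matrix.mul_sub,
    Matrix.mul_neg, Matrix.neg_mul, Matrix.mul_assoc]
  abel

end Matrix

section StochasticLQR

variable {ι κ : Type*} [Fintype ι] [Fintype κ] {α : Type*} [CommRing α]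

def oneStepCost (A C : Matrix ι ι α) (B D : Matrix ι κ α) (R : Matrix κ κ α)
    (P : Matrix ι ι α) (γ : α) (L : Matrix κ ι α) : Matrix ι ι α :=
  γ • ((A + B * L)ᵀ * P * (A + B * L)) + γ • ((C + D * L)ᵀ * P * (C + D * L)) + Lᵀ * R * L

theorem oneStepCost_eq_quadratic (A C : Matrix ι ι α) (B D : Matrix ι κ α) (R : Matrix κ κ α)
    {P : Matrix ι ι α} (hP : Pᵀ = P) (γ : α) (L : Matrix κ ι α) :
    oneStepCost A C B D R P γ L =
      γ • (Aᵀ * P * A + Cᵀ * P * C) + (Lᵀ * (R + γ • (Bᵀ * P * B) + γ • (Dᵀ * P * D)) * L +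
        Lᵀ * (γ • (Bᵀ * P * A) + γ • (Dᵀ * P * C)) +
        (γ • (Bᵀ * P * A) + γ • (Dᵀ * P * C))ᵀ * L) := by
  simp only [oneStepCost, transpose_add, transpose_smul, transpose_mul, transpose_transpose, hP,
    Matrix.add_mul, Matrix.mul_add, Matrix.smul_mul, Matrix.mul_smul, smul_add, Matrix.mul_assoc]
  abel

theorem oneStepCost_sub_oneStepCost_of_mul_eq_neg (A C : Matrix ι ι α) (B D : Matrix ι κ α)
    (R : Matrix κ κ α) {P : Matrix ι ι α} (hP : Pᵀ = P) (γ : α)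
    (hG : (R + γ • (Bᵀ * P * B) + γ • (Dᵀ * P * D))ᵀ = R + γ • (Bᵀ * P * B) + γ • (Dᵀ * P * D))
    {L₀ : Matrix κ ι α}
    (hL₀ : (R + γ • (Bᵀ * P * B) + γ • (Dᵀ * P * D)) * L₀ = -(γ • (Bᵀ * P * A) + γ • (Dᵀ * P * C)))
    (L : Matrix κ ι α) :
    oneStepCost A C B D R P γ L - oneStepCost A C B D R P γ L₀ =
      (L - L₀)ᵀ * (R + γ • (Bᵀ * P * B) + γ • (Dᵀ * P * D)) * (L - L₀) := by
  rw [oneStepCost_eq_quadratic _ _ _ _ _ hP, oneStepCost_eq_quadratic _ _ _ _ _ hP,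
    add_sub_add_left_eq_sub, quadratic_sub_eq_of_mul_eq_neg hG hL₀]

end StochasticLQR

theorem stmt8 {n m : ℕ} (A C : Matrix (Fin n) (Fin n) ℝ)
    (B D : Matrix (Fin n) (Fin m) ℝ)
    (R : Matrix (Fin m) (Fin m) ℝ) (P : Matrix (Fin n) (Fin n) ℝ) (γ : ℝ)
    (hR : R.PosDef) (hP : P.PosSemidef) (hγ : 0 ≤ γ)
    (L₁ : Matrix (Fin m) (Fin n) ℝ)
    (hL₁ : L₁ = -((R + γ • (Bᵀ * P * B) + γ • (Dᵀ * P * D))⁻¹ *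
      (γ • (Bᵀ * P * A) + γ • (Dᵀ * P * C)))) :
    ∀ L : Matrix (Fin m) (Fin n) ℝ,
      ((γ • ((A + B * L)ᵀ * P * (A + B * L)) +
          γ • ((C + D * L)ᵀ * P * (C + D * L)) + Lᵀ * R * L) -
        (γ • ((A + B * L₁)ᵀ * P * (A + B * L₁)) +
          γ • ((C + D * L₁)ᵀ * P * (C + D * L₁)) + L₁ᵀ * R * L₁)).PosSemidef := by
  intro L
  set G := R + γ • (Bᵀ * P * B) + γ • (Dᵀ * P * D)
  set W := γ • (Bᵀ * P * A) + γ • (Dᵀ * P * C)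
  have hPt : Pᵀ = P := by simpa [conjTranspose_eq_transpose_of_trivial] using hP.isHermitian.eq
  have hG : G.PosDef := by
    refine (hR.add_posSemidef ?_).add_posSemidef ?_ <;>
    · refine PosSemidef.smul ?_ hγ
      simpa [conjTranspose_eq_transpose_of_trivial] using hP.conjTranspose_mul_mul_same _
  have hGt : Gᵀ = G := by simpa [conjTranspose_eq_transpose_of_trivial] using hG.isHermitian.eq
  have hGL₁ : G * L₁ = -W := by
    rw [hL₁, Matrix.mul_neg, mul_nonsing_inv_cancel_left _ _ hG.det_pos.ne'.isUnit]
  change (oneStepCost A C B D R P γ L - oneStepCost A C B D R P γ L₁).PosSemidef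
  rw [oneStepCost_sub_oneStepCost_of_mul_eq_neg A C B D R hPt γ hGt hGL₁]
  simpa [conjTranspose_eq_transpose_of_trivial] using
    hG.posSemidef.conjTranspose_mul_mul_same (L - L₁)
end

section
/- Let A, C ∈ ℝ^{n×n}, B, D ∈ ℝ^{n×m}, let Q ∈ ℝ^{n×n} and R ∈ ℝ^{m×m} be symmetric, let γ ≥ 0, and let L₀, L₁ ∈ ℝ^{m×n} and symmetric P₀, P₁ ∈ ℝ^{n×n} satisfy: P₀ = γ(A+BL₀)ᵀP₀(A+BL₀) + γ(C+DL₀)ᵀP₀(C+DL₀) + L₀ᵀRL₀ + Q; P₁ = γ(A+BL₁)ᵀP₁(A+BL₁) + γ(C+DL₁)ᵀP₁(C+DL₁) + L₁ᵀRL₁ + Q; R + γBᵀP₀B + γDᵀP₀D is invertible and L₁ = −(R + γBᵀP₀B + γDᵀP₀D)⁻¹(γBᵀP₀A + γDᵀP₀C). Then P₀ − P₁ = γ(A+BL₁)ᵀ(P₀−P₁)(A+BL₁) + γ(C+DL₁)ᵀ(P₀−P₁)(C+DL₁) + (L₁−L₀)ᵀ(R + γBᵀP₀B + γDᵀP₀D)(L₁−L₀).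 -/
open Matrix

theorem stmt9 {n m : ℕ} (A C : Matrix (Fin n) (Fin n) ℝ)
    (B D : Matrix (Fin n) (Fin m) ℝ)
    (Q : Matrix (Fin n) (Fin n) ℝ) (R : Matrix (Fin m) (Fin m) ℝ) (γ : ℝ)
    (hQ : Q.IsSymm) (hR : R.IsSymm) (hγ : 0 ≤ γ)
    (L₀ L₁ : Matrix (Fin m) (Fin n) ℝ) (P₀ P₁ : Matrix (Fin n) (Fin n) ℝ)
    (hP₀ : P₀.IsSymm) (hP₁ : P₁.IsSymm)
    (hsle₀ : P₀ = γ • ((A + B * L₀)ᵀ * P₀ * (A + B * L₀)) +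
      γ • ((C + D * L₀)ᵀ * P₀ * (C + D * L₀)) + L₀ᵀ * R * L₀ + Q)
    (hsle₁ : P₁ = γ • ((A + B * L₁)ᵀ * P₁ * (A + B * L₁)) +
      γ • ((C + D * L₁)ᵀ * P₁ * (C + D * L₁)) + L₁ᵀ * R * L₁ + Q)
    (hunit : IsUnit (R + γ • (Bᵀ * P₀ * B) + γ • (Dᵀ * P₀ * D)))
    (hL₁ : L₁ = -((R + γ • (Bᵀ * P₀ * B) + γ • (Dᵀ * P₀ * D))⁻¹ *
      (γ • (Bᵀ * P₀ * A) + γ • (Dᵀ * P₀ * C)))) :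
    P₀ - P₁ = γ • ((A + B * L₁)ᵀ * (P₀ - P₁) * (A + B * L₁)) +
      γ • ((C + D * L₁)ᵀ * (P₀ - P₁) * (C + D * L₁)) +
      (L₁ - L₀)ᵀ * (R + γ • (Bᵀ * P₀ * B) + γ • (Dᵀ * P₀ * D)) * (L₁ - L₀) := by
  set G : Matrix (Fin m) (Fin m) ℝ := R + γ • (Bᵀ * P₀ * B) + γ • (Dᵀ * P₀ * D) with hGdef
  set H : Matrix (Fin m) (Fin n) ℝ := γ • (Bᵀ * P₀ * A) + γ • (Dᵀ * P₀ * C) with hHdef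
  set Ht : Matrix (Fin n) (Fin m) ℝ := γ • (Aᵀ * P₀ * B) + γ • (Cᵀ * P₀ * D) with hHtdef
  have hdet : IsUnit G.det := (Matrix.isUnit_iff_isUnit_det G).mp hunit
  have hG1 : H = -(G * L₁) := by
    rw [hL₁, Matrix.mul_neg, ← Matrix.mul_assoc, Matrix.mul_nonsing_inv _ hdet,
      Matrix.one_mul, neg_neg]
  have hGsymm : Gᵀ = G := by
    simp only [hGdef, Matrix.transpose_add, Matrix.transpose_smul, Matrix.transpose_mul,
      Matrix.transpose_transpose, hR.eq, hP₀.eq, Matrix.mul_assoc]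
  have hG2 : Ht = -(L₁ᵀ * G) := by
    have h := congrArg Matrix.transpose hG1
    rw [hHdef] at h
    simp only [Matrix.transpose_add, Matrix.transpose_smul, Matrix.transpose_mul,
      Matrix.transpose_transpose, Matrix.transpose_neg, hGsymm, hP₀.eq, Matrix.mul_assoc] at h
    rw [hHtdef]
    simpa [Matrix.mul_assoc] using h
  have key : ∀ (L : Matrix (Fin m) (Fin n) ℝ) (P : Matrix (Fin n) (Fin n) ℝ),
      γ • ((A + B * L)ᵀ * P * (A + B * L)) + γ • ((C + D * L)ᵀ * P * (C + D * L)) +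
        Lᵀ * R * L
      = (γ • (Aᵀ * P * A) + γ • (Cᵀ * P * C)) +
        Lᵀ * (γ • (Bᵀ * P * A) + γ • (Dᵀ * P * C)) +
        (γ • (Aᵀ * P * B) + γ • (Cᵀ * P * D)) * L +
        Lᵀ * (R + γ • (Bᵀ * P * B) + γ • (Dᵀ * P * D)) * L := by
    intro L P
    simp only [Matrix.transpose_add, Matrix.transpose_mul, Matrix.add_mul, Matrix.mul_add,
      smul_add, Matrix.mul_smul, Matrix.smul_mul, Matrix.mul_assoc]
    abel
  -- rewrite the two SLEs in completed-square form
  have e0 : P₀ = (γ • (Aᵀ * P₀ * A) + γ • (Cᵀ * P₀ * C)) + L₀ᵀ * H + Ht * L₀ +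
      L₀ᵀ * G * L₀ + Q := by
    conv_lhs => rw [hsle₀]
    rw [key L₀ P₀]
  have e1 : γ • ((A + B * L₁)ᵀ * P₀ * (A + B * L₁)) +
      γ • ((C + D * L₁)ᵀ * P₀ * (C + D * L₁)) =
      (γ • (Aᵀ * P₀ * A) + γ • (Cᵀ * P₀ * C)) + L₁ᵀ * H + Ht * L₁ +
      L₁ᵀ * G * L₁ - L₁ᵀ * R * L₁ := by
    have := key L₁ P₀
    rw [← hHdef, ← hHtdef, ← hGdef] at this
    linear_combination (norm := abel) this
  have e2 : γ • ((A + B * L₁)ᵀ * P₁ * (A + B * L₁)) +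
      γ • ((C + D * L₁)ᵀ * P₁ * (C + D * L₁)) = P₁ - L₁ᵀ * R * L₁ - Q := by
    conv_rhs => rw [hsle₁]
    abel
  -- linearity of the sandwich in P
  have lin : γ • ((A + B * L₁)ᵀ * (P₀ - P₁) * (A + B * L₁)) +
      γ • ((C + D * L₁)ᵀ * (P₀ - P₁) * (C + D * L₁)) =
      (γ • ((A + B * L₁)ᵀ * P₀ * (A + B * L₁)) +
       γ • ((C + D * L₁)ᵀ * P₀ * (C + D * L₁))) -
      (γ • ((A + B * L₁)ᵀ * P₁ * (A + B * L₁)) +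
       γ • ((C + D * L₁)ᵀ * P₁ * (C + D * L₁))) := by
    simp only [Matrix.mul_sub, Matrix.sub_mul, smul_sub]
    abel
  have quad : L₀ᵀ * H + Ht * L₀ + L₀ᵀ * G * L₀ =
      L₁ᵀ * H + Ht * L₁ + L₁ᵀ * G * L₁ + (L₁ - L₀)ᵀ * G * (L₁ - L₀) := by
    rw [hG1, hG2]
    simp only [Matrix.transpose_sub, Matrix.sub_mul, Matrix.mul_sub, Matrix.mul_neg,
      Matrix.neg_mul, Matrix.mul_assoc]
    abel
  rw [lin, e1, e2]
  calc P₀ - P₁ = ((γ • (Aᵀ * P₀ * A) + γ • (Cᵀ * P₀ * C)) + L₀ᵀ * H + Ht * L₀ +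
      L₀ᵀ * G * L₀ + Q) - P₁ := by rw [← e0]
    _ = ((γ • (Aᵀ * P₀ * A) + γ • (Cᵀ * P₀ * C)) + (L₁ᵀ * H + Ht * L₁ + L₁ᵀ * G * L₁ +
      (L₁ - L₀)ᵀ * G * (L₁ - L₀)) + Q) - P₁ := by rw [← quad]; abel_nf
    _ = _ := by abel
end

section
/- Let A, C ∈ ℝ^{n×n}, B, D ∈ ℝ^{n×m}, L ∈ ℝ^{m×n}, let γ ≥ 0, and suppose P ∈ ℝ^{n×n} is symmetric positive definite and satisfies P = γ(A+BL)ᵀP(A+BL) + γ(C+DL)ᵀP(C+DL) + U for some symmetric positive definite matrix U ∈ ℝ^{n×n}. Then γ · ρ(M_L) < 1, where M_L = (A+BL)⊗(A+BL) + (C+DL)⊗(C+DL). -/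
open Matrix Kronecker

/-!
Put F = A + BL, G = C + DL and Φ(X) = γ (FᵀXF + GᵀXG), a positive map on complex matrices.
Reshaping a left eigenvector of M_L for μ gives X ≠ 0 with Φ(X) = γμ X. If P ≤ cU with
c ≥ 1, the Lyapunov equation gives Φ(P) = P - U ≤ θP with θ = 1 - c⁻¹ < 1. By positivity,
-aP ≤ Y ≤ aP implies -aθᴺP ≤ Φᴺ(Y) ≤ aθᴺP. Every Hermitian Y lies in such an interval, and
every X is Hermitian + i·Hermitian, so ‖Φᴺ(X)‖ = O(θᴺ); with Φᴺ(X) = (γμ)ᴺX this forces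
γ|μ| ≤ θ. Only positivity of Φ enters, so the bound holds for positive maps on any unital
C⋆-algebra.
-/

open Filter Set
open scoped ComplexStarModule

lemma le_of_forall_mul_pow_le {a x y C : ℝ} (ha : 0 < a) (hy : 0 ≤ y)
    (h : ∀ N : ℕ, a * x ^ N ≤ C * y ^ N) : x ≤ y := by
  by_contra! hxy
  have hx : 0 < x := hy.trans_lt hxy
  have hlim : Tendsto (fun N : ℕ => C * (y / x) ^ N) atTop (nhds 0) := by
    simpa using (tendsto_pow_atTop_nhds_zero_of_lt_one (div_nonneg hy hx.le)
      ((div_lt_one hx).mpr hxy)).const_mul C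
  obtain ⟨N, hN⟩ := (hlim.eventually (gt_mem_nhds ha)).exists
  rw [div_pow, mul_div_assoc', div_lt_iff₀ (pow_pos hx N)] at hN
  linarith [h N]

section CStarAlgebra

variable {A : Type*} [CStarAlgebra A]

noncomputable def lyapunovMap (γ : ℝ) (F G : A) : A →ₗ[ℂ] A where
  toFun X := γ • (star F * X * F + star G * X * G)
  map_add' X Y := by simp only [mul_add, add_mul, smul_add]; abel
  map_smul' c X := by simp only [mul_smul_comm, smul_mul_assoc, ← smul_add, smul_comm γ c]; rfl

lemma lyapunovMap_apply (γ : ℝ) (F G X : A) :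
    lyapunovMap γ F G X = γ • (star F * X * F + star G * X * G) := rfl

variable [PartialOrder A] [StarOrderedRing A]

lemma lyapunovMap_monotone {γ : ℝ} (hγ : 0 ≤ γ) (F G : A) : Monotone (lyapunovMap γ F G) :=
  fun _ _ hXY => smul_le_smul_of_nonneg_left (add_le_add (star_left_conjugate_le_conjugate hXY F)
    (star_left_conjugate_le_conjugate hXY G)) hγ

lemma le_one_sub_inv_smul_of_eq_add {x y u : A} {c : ℝ} (hc : 0 < c) (hxu : x ≤ c • u)
    (hxy : x = y + u) : y ≤ (1 - c⁻¹) • x :=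
  calc y = x - u := eq_sub_of_add_eq hxy.symm
    _ ≤ x - c⁻¹ • x := by gcongr; exact (inv_smul_le_iff_of_pos hc).2 hxu
    _ = (1 - c⁻¹) • x := by rw [sub_smul, one_smul]

lemma IsStrictlyPositive.exists_pos_algebraMap_le {U : A} (hU : IsStrictlyPositive U) :
    ∃ r > 0, algebraMap ℝ A r ≤ U := by
  cases subsingleton_or_nontrivial A
  · exact ⟨1, one_pos, (Subsingleton.elim _ _).le⟩
  · exact (CFC.exists_pos_algebraMap_le_iff hU.isSelfAdjoint).mpr
      ((StarOrderedRing.isStrictlyPositive_iff_spectrum_pos U).mp hU)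

lemma IsSelfAdjoint.eventually_le_smul {Y U : A} (hY : IsSelfAdjoint Y)
    (hU : IsStrictlyPositive U) : ∀ᶠ c : ℝ in atTop, Y ≤ c • U := by
  obtain ⟨r, hr, hrU⟩ := hU.exists_pos_algebraMap_le
  filter_upwards [eventually_ge_atTop (‖Y‖ / r)] with c hc
  have hc0 : 0 ≤ c := (div_nonneg (norm_nonneg Y) hr.le).trans hc
  calc Y ≤ algebraMap ℝ A ‖Y‖ := hY.le_algebraMap_norm_self
    _ ≤ algebraMap ℝ A (c * r) := algebraMap_mono A ((div_le_iff₀ hr).mp hc)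
    _ = c • algebraMap ℝ A r := by rw [map_mul, Algebra.smul_def]
    _ ≤ c • U := smul_le_smul_of_nonneg_left hrU hc0

lemma IsSelfAdjoint.exists_mem_Icc_smul {Y P : A} (hY : IsSelfAdjoint Y)
    (hP : IsStrictlyPositive P) : ∃ a : ℝ, 0 ≤ a ∧ Y ∈ Icc (-(a • P)) (a • P) := by
  obtain ⟨a, ha, hYa, hYa'⟩ := ((eventually_ge_atTop (0 : ℝ)).and
    ((IsSelfAdjoint.eventually_le_smul hY hP).and
      (IsSelfAdjoint.eventually_le_smul hY.neg hP))).exists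
  exact ⟨a, ha, neg_le.mp hYa', hYa⟩

lemma norm_le_of_mem_Icc_smul {Z P : A} {a : ℝ} (ha : 0 ≤ a)
    (hZ : Z ∈ Icc (-(a • P)) (a • P)) : ‖Z‖ ≤ 3 * a * ‖P‖ := by
  have h0 : 0 ≤ Z + a • P := by simpa [neg_le_iff_add_nonneg] using hZ.1
  have h1 : Z + a • P ≤ (2 * a) • P := by rw [two_mul, add_smul]; gcongr; exact hZ.2
  calc ‖Z‖ = ‖(Z + a • P) - a • P‖ := by rw [add_sub_cancel_right]
    _ ≤ ‖Z + a • P‖ + ‖a • P‖ := norm_sub_le _ _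
    _ ≤ ‖(2 * a) • P‖ + ‖a • P‖ := by
      gcongr; exact CStarAlgebra.norm_le_norm_of_nonneg_of_le h0 h1
    _ = 3 * a * ‖P‖ := by
      simp only [norm_smul, Real.norm_eq_abs, abs_of_nonneg ha,
        abs_of_nonneg (by positivity : 0 ≤ 2 * a)]
      ring

section PositiveMap

variable {Φ : A →ₗ[ℂ] A} {P : A} {θ : ℝ}

lemma apply_mem_Icc_smul_of_monotone (hΦ : Monotone Φ) (hΦP : Φ P ≤ θ • P) {a : ℝ} (ha : 0 ≤ a)
    {Y : A} (hY : Y ∈ Icc (-(a • P)) (a • P)) :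
    Φ Y ∈ Icc (-((a * θ) • P)) ((a * θ) • P) := by
  have hΦaP : Φ (a • P) ≤ (a * θ) • P := by
    rw [LinearMap.map_smul_of_tower, mul_smul]
    exact smul_le_smul_of_nonneg_left hΦP ha
  refine ⟨?_, (hΦ hY.2).trans hΦaP⟩
  calc -((a * θ) • P) ≤ -Φ (a • P) := neg_le_neg hΦaP
    _ = Φ (-(a • P)) := (map_neg Φ _).symm
    _ ≤ Φ Y := hΦ hY.1

lemma pow_apply_mem_Icc_smul_of_monotone (hΦ : Monotone Φ) (hθ : 0 ≤ θ) (hΦP : Φ P ≤ θ • P)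
    {a : ℝ} (ha : 0 ≤ a) {Y : A} (hY : Y ∈ Icc (-(a • P)) (a • P)) (N : ℕ) :
    (Φ ^ N) Y ∈ Icc (-((a * θ ^ N) • P)) ((a * θ ^ N) • P) := by
  induction N with
  | zero => simpa using hY
  | succ N ih =>
    rw [pow_succ' Φ N, Module.End.mul_apply, pow_succ θ N, ← mul_assoc]
    exact apply_mem_Icc_smul_of_monotone hΦ hΦP (by positivity) ih

lemma IsSelfAdjoint.exists_norm_pow_apply_le (hΦ : Monotone Φ) (hP : IsStrictlyPositive P)
    (hθ : 0 ≤ θ) (hΦP : Φ P ≤ θ • P) {Y : A} (hY : IsSelfAdjoint Y) :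
    ∃ C, ∀ N : ℕ, ‖(Φ ^ N) Y‖ ≤ C * θ ^ N := by
  obtain ⟨a, ha, hYa⟩ := hY.exists_mem_Icc_smul hP
  refine ⟨3 * a * ‖P‖, fun N => ?_⟩
  calc ‖(Φ ^ N) Y‖ ≤ 3 * (a * θ ^ N) * ‖P‖ := norm_le_of_mem_Icc_smul (by positivity)
        (pow_apply_mem_Icc_smul_of_monotone hΦ hθ hΦP ha hYa N)
    _ = 3 * a * ‖P‖ * θ ^ N := by ring

lemma exists_norm_pow_apply_le_of_monotone (hΦ : Monotone Φ) (hP : IsStrictlyPositive P)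
    (hθ : 0 ≤ θ) (hΦP : Φ P ≤ θ • P) (X : A) :
    ∃ C, ∀ N : ℕ, ‖(Φ ^ N) X‖ ≤ C * θ ^ N := by
  obtain ⟨C₁, h₁⟩ := (ℜ X).2.exists_norm_pow_apply_le hΦ hP hθ hΦP
  obtain ⟨C₂, h₂⟩ := (ℑ X).2.exists_norm_pow_apply_le hΦ hP hθ hΦP
  refine ⟨C₁ + C₂, fun N => ?_⟩
  rw [← realPart_add_I_smul_imaginaryPart X, map_add, map_smul]
  calc _ ≤ ‖(Φ ^ N) (ℜ X)‖ + ‖Complex.I • (Φ ^ N) (ℑ X)‖ := norm_add_le _ _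
    _ = ‖(Φ ^ N) (ℜ X)‖ + ‖(Φ ^ N) (ℑ X)‖ := by rw [norm_smul, Complex.norm_I, one_mul]
    _ ≤ C₁ * θ ^ N + C₂ * θ ^ N := add_le_add (h₁ N) (h₂ N)
    _ = (C₁ + C₂) * θ ^ N := by ring

theorem Module.End.HasEigenvalue.norm_le_of_monotone (hΦ : Monotone Φ)
    (hP : IsStrictlyPositive P) (hθ : 0 ≤ θ) (hΦP : Φ P ≤ θ • P) {μ : ℂ}
    (hμ : Module.End.HasEigenvalue Φ μ) : ‖μ‖ ≤ θ := by
  obtain ⟨X, hX⟩ := hμ.exists_hasEigenvector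
  obtain ⟨C, hC⟩ := exists_norm_pow_apply_le_of_monotone hΦ hP hθ hΦP X
  refine le_of_forall_mul_pow_le (C := C) (norm_pos_iff.mpr hX.2) hθ fun N => ?_
  simpa [hX.pow_apply, norm_smul, mul_comm] using hC N

end PositiveMap

end CStarAlgebra

section Matrix

variable {ι : Type*} [Fintype ι] [DecidableEq ι]

lemma Matrix.exists_ne_zero_transpose_mul_mul_add_eq_smul {K : Type*} [Field K]
    {F G : Matrix ι ι K} {μ : K} (hμ : μ ∈ spectrum K (F ⊗ₖ F + G ⊗ₖ G)) :
    ∃ X ≠ 0, Fᵀ * X * F + Gᵀ * X * G = μ • X := by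
  rw [spectrum.mem_iff, isUnit_iff_isUnit_det, isUnit_iff_ne_zero, not_not,
    ← exists_vecMul_eq_zero_iff] at hμ
  obtain ⟨w, hw0, hw⟩ := hμ
  obtain ⟨X, rfl⟩ := vec_bijective.2 w
  refine ⟨X, fun h => hw0 (by simp [h]), ?_⟩
  rw [Algebra.algebraMap_eq_smul_one, vecMul_sub, vecMul_smul, vecMul_one, vecMul_add,
    vec_vecMul_kronecker, vec_vecMul_kronecker, sub_eq_zero, ← vec_add, ← vec_smul] at hw
  exact vec_inj.1 hw.symm

noncomputable def Matrix.ofRealStarAlgHom : Matrix ι ι ℝ →⋆ₐ[ℝ] Matrix ι ι ℂ :=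
  { Complex.ofRealAm.mapMatrix with map_star' := fun M => by ext; simp }

@[simp] lemma Matrix.ofRealStarAlgHom_apply (M : Matrix ι ι ℝ) :
    ofRealStarAlgHom M = M.map Complex.ofReal := rfl

lemma Matrix.star_ofRealStarAlgHom (M : Matrix ι ι ℝ) :
    star (ofRealStarAlgHom M) = (ofRealStarAlgHom M)ᵀ := by
  ext; simp

open scoped MatrixOrder in
lemma Matrix.PosDef.isStrictlyPositive_ofRealStarAlgHom {P : Matrix ι ι ℝ} (hP : P.PosDef) :
    IsStrictlyPositive (ofRealStarAlgHom P) :=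
  IsStrictlyPositive.iff_of_unital.mpr
    ⟨map_nonneg ofRealStarAlgHom hP.posSemidef.nonneg, hP.isUnit.map _⟩

lemma mul_specRad_le {M : Matrix ι ι ℝ} {γ r : ℝ} (hγ : 0 ≤ γ) (hr : 0 ≤ r)
    (h : ∀ μ ∈ spectrum ℂ (M.map Complex.ofReal), γ * ‖μ‖ ≤ r) : γ * specRad M ≤ r := by
  rw [specRad, ← smul_eq_mul, ← Real.sSup_smul_of_nonneg hγ]
  refine Real.sSup_le ?_ hr
  rintro _ ⟨_, ⟨μ, hμ, rfl⟩, rfl⟩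
  exact h μ hμ

end Matrix

-- `Matrix.Norms.L2Operator` supplies the C⋆-algebra structure on complex matrices.
open scoped MatrixOrder Matrix.Norms.L2Operator in
theorem stmt10 {n m : ℕ} (A C : Matrix (Fin n) (Fin n) ℝ)
    (B D : Matrix (Fin n) (Fin m) ℝ) (L : Matrix (Fin m) (Fin n) ℝ) (γ : ℝ)
    (hγ : 0 ≤ γ) (P U : Matrix (Fin n) (Fin n) ℝ)
    (hP : P.PosDef) (hU : U.PosDef)
    (hlyap : P = γ • ((A + B * L)ᵀ * P * (A + B * L)) +
      γ • ((C + D * L)ᵀ * P * (C + D * L)) + U) :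
    γ * specRad ((A + B * L) ⊗ₖ (A + B * L) + (C + D * L) ⊗ₖ (C + D * L)) < 1 := by
  set F := A + B * L
  set G := C + D * L
  set f : Matrix (Fin n) (Fin n) ℝ →⋆ₐ[ℝ] Matrix (Fin n) (Fin n) ℂ := ofRealStarAlgHom
  set Φ := lyapunovMap γ (f F) (f G)
  have hfP := hP.isStrictlyPositive_ofRealStarAlgHom
  obtain ⟨c, hPU, hc⟩ := ((IsSelfAdjoint.eventually_le_smul hfP.isSelfAdjoint
    hU.isStrictlyPositive_ofRealStarAlgHom).and (eventually_ge_atTop 1)).exists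
  have hθ : 0 ≤ 1 - c⁻¹ := sub_nonneg.2 (inv_le_one_of_one_le₀ hc)
  have hlyapc : f P = Φ (f P) + f U := by
    have := congrArg f hlyap
    simp only [map_add, map_smul, map_mul, ← conjTranspose_eq_transpose_of_trivial,
      ← star_eq_conjTranspose, map_star] at this
    rwa [lyapunovMap_apply, smul_add]
  have hΦP := le_one_sub_inv_smul_of_eq_add (by positivity) hPU hlyapc
  refine (mul_specRad_le hγ hθ fun μ hμ => ?_).trans_lt (sub_lt_self 1 (by positivity))
  rw [show (F ⊗ₖ F + G ⊗ₖ G).map Complex.ofReal = f F ⊗ₖ f F + f G ⊗ₖ f G by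
    ext; simp [f]] at hμ
  obtain ⟨X, hX0, hX⟩ := exists_ne_zero_transpose_mul_mul_add_eq_smul hμ
  have hΦμ : Module.End.HasEigenvalue Φ (γ * μ) := by
    refine Module.End.hasEigenvalue_of_hasEigenvector ⟨Module.End.mem_eigenspace_iff.2 ?_, hX0⟩
    rw [lyapunovMap_apply, star_ofRealStarAlgHom, star_ofRealStarAlgHom, hX, ← smul_assoc,
      Complex.real_smul]
  simpa [norm_mul, abs_of_nonneg hγ] using
    hΦμ.norm_le_of_monotone (lyapunovMap_monotone hγ _ _) hfP hθ hΦP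
end

section
/- Let A, C ∈ ℝ^{n×n}, B, D ∈ ℝ^{n×m}, let Q ∈ ℝ^{n×n} and R ∈ ℝ^{m×m} be symmetric positive definite, and let γ ∈ [0,1). Let (L_i)_{i≥0} in ℝ^{m×n} and (P_i)_{i≥0} symmetric positive definite in ℝ^{n×n} satisfy, for every i: P_i = γ(A+BL_i)ᵀP_i(A+BL_i) + γ(C+DL_i)ᵀP_i(C+DL_i) + L_iᵀRL_i + Q, and L_{i+1} = −(R + γBᵀP_iB + γDᵀP_iD)⁻¹(γBᵀP_iA + γDᵀP_iC). Then for every i, P_{i+1} ≤ P_i, i.e. P_i − P_{i+1} is positive semidefinite. -/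
/-!
Let `g` be the closed-loop map `X ↦ γ (A+BL')ᵀ X (A+BL') + γ (C+DL')ᵀ X (C+DL')` of the improved
gain `L' = L (i+1)`. Completing the square in the gain shows that `L'` minimises
`L ↦ g_L (P i) + Lᵀ R L`, hence `Δ = P i - P (i+1)` satisfies `g Δ ≤ Δ`; and the Lyapunov equation
of `P (i+1)` gives `P (i+1) - g (P (i+1)) = L'ᵀ R L' + Q > 0`. Such a strict Lyapunov matrix `P`
for the positive map `g` makes `g` a contraction in the order it induces: `g P ≤ r P` for some
`r < 1`. So if `Δ + t P ≥ 0`, applying `g` yields `Δ + r t P ≥ 0`; iterating and letting `rᴺ t → 0`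
gives `Δ ≥ 0`.
-/

open Matrix Filter Topology
open scoped MatrixOrder

namespace Matrix

variable {ι κ : Type*}

theorem complete_square_of_mul_eq_neg {α : Type*} [CommRing α] [Fintype κ]
    {M : Matrix κ κ α} (hM : Mᵀ = M) {K L L' : Matrix κ ι α} (hL' : M * L' = -K) :
    Lᵀ * K + Kᵀ * L + Lᵀ * M * L =
      L'ᵀ * K + Kᵀ * L' + L'ᵀ * M * L' + (L - L')ᵀ * M * (L - L') := by
  obtain rfl : K = -(M * L') := by rw [hL', neg_neg]
  simp only [transpose_neg, transpose_mul, transpose_sub, hM, Matrix.mul_neg, Matrix.neg_mul,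
    Matrix.mul_sub, Matrix.sub_mul, Matrix.mul_assoc]
  abel

variable [Fintype ι] [Fintype κ]

theorem PosSemidef.transpose_mul_mul_same {X : Matrix ι ι ℝ} (hX : X.PosSemidef)
    (F : Matrix ι κ ℝ) : (Fᵀ * X * F).PosSemidef := by
  simpa only [conjTranspose_eq_transpose_of_trivial] using hX.conjTranspose_mul_mul_same F

theorem isClosed_setOf_posSemidef_s11 : IsClosed {X : Matrix ι ι ℝ | X.PosSemidef} := by
  simp only [posSemidef_iff_dotProduct_mulVec, Set.ofPred_and, Set.ofPred_forall]
  refine .inter (isClosed_eq continuous_id.matrix_conjTranspose continuous_id) ?_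
  exact isClosed_iInter fun x ↦ isClosed_le continuous_const
    (continuous_const.dotProduct (continuous_id.matrix_mulVec continuous_const))

theorem eventually_le_smul_of_posDef [DecidableEq ι] {X Q : Matrix ι ι ℝ} (hX : X.IsHermitian)
    (hQ : Q.PosDef) : ∀ᶠ c : ℝ in atTop, X ≤ c • Q := by
  nontriviality Matrix ι ι ℝ
  obtain ⟨r, hr, hrQ⟩ := (CFC.exists_pos_algebraMap_le_iff hQ.isHermitian.isSelfAdjoint).2
    fun x hx ↦ hQ.isStrictlyPositive.spectrum_pos hx
  obtain ⟨s, hs⟩ := X.finite_real_spectrum.bddAbove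
  filter_upwards [eventually_ge_atTop (s / r), eventually_ge_atTop 0] with c hc hc0
  calc X ≤ algebraMap ℝ _ s := le_algebraMap_of_spectrum_le (fun x hx ↦ hs hx) hX.isSelfAdjoint
    _ ≤ algebraMap ℝ _ (c * r) := algebraMap_le_algebraMap.2 ((div_le_iff₀ hr).1 hc)
    _ = c • algebraMap ℝ _ r := by
      rw [map_mul, Algebra.algebraMap_eq_smul_one c, smul_mul_assoc, one_mul]
    _ ≤ c • Q := smul_le_smul_of_nonneg_left hrQ hc0

theorem nonneg_of_map_le_self [DecidableEq ι] {g : Matrix ι ι ℝ →ₗ[ℝ] Matrix ι ι ℝ}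
    (hg : ∀ X, 0 ≤ X → 0 ≤ g X) {P Δ : Matrix ι ι ℝ} (hP : P.PosDef) (hPg : (P - g P).PosDef)
    (hΔ : Δ.IsHermitian) (hgΔ : g Δ ≤ Δ) : 0 ≤ Δ := by
  obtain ⟨c, hPc, hc⟩ :=
    ((eventually_le_smul_of_posDef hP.isHermitian hPg).and (eventually_ge_atTop 1)).exists
  set r := 1 - c⁻¹
  have hr : 0 ≤ r := sub_nonneg.2 (inv_le_one_of_one_le₀ hc)
  have hgP : g P ≤ r • P := by
    have hc0 : c ≠ 0 := by positivity
    have : r • P - g P = c⁻¹ • (c • (P - g P) - P) := by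
      rw [smul_sub, smul_smul, inv_mul_cancel₀ hc0, one_smul, sub_smul, one_smul]; abel
    rw [← sub_nonneg, this]
    exact smul_nonneg (by positivity) (sub_nonneg.2 hPc)
  obtain ⟨t, hΔt, ht⟩ :=
    ((eventually_le_smul_of_posDef hΔ.neg hP).and (eventually_ge_atTop 0)).exists
  have hstep : ∀ s : ℝ, 0 ≤ s → 0 ≤ Δ + s • P → 0 ≤ Δ + (s * r) • P := fun s hs hsP ↦
    calc 0 ≤ g (Δ + s • P) := hg _ hsP
      _ = g Δ + s • g P := by rw [map_add, map_smul]
      _ ≤ Δ + (s * r) • P := by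
        rw [mul_smul]; exact add_le_add hgΔ (smul_le_smul_of_nonneg_left hgP hs)
  have hiter : ∀ N : ℕ, 0 ≤ Δ + (t * r ^ N) • P := by
    intro N
    induction N with
    | zero => simpa [neg_le_iff_add_nonneg'] using hΔt
    | succ N ih => simpa [pow_succ, mul_assoc] using hstep _ (by positivity) ih
  have hlim : Tendsto (fun N : ℕ ↦ Δ + (t * r ^ N) • P) atTop (𝓝 Δ) := by
    have hr1 : r < 1 := sub_lt_self 1 (by positivity)
    simpa using tendsto_const_nhds.add
      (((tendsto_pow_atTop_nhds_zero_of_lt_one hr hr1).const_mul t).smul_const P)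
  exact nonneg_iff_posSemidef.2 <| isClosed_setOf_posSemidef_s11.mem_of_tendsto hlim <|
    .of_forall fun N ↦ nonneg_iff_posSemidef.1 (hiter N)

end Matrix

noncomputable section PolicyIteration

variable {ι κ : Type*} [Fintype ι] [Fintype κ] (γ : ℝ) (A C : Matrix ι ι ℝ) (B D : Matrix ι κ ℝ)

def closedLoopMap (L : Matrix κ ι ℝ) : Matrix ι ι ℝ →ₗ[ℝ] Matrix ι ι ℝ :=
  γ • LinearMap.mulLeftRight ℝ ((A + B * L)ᵀ, A + B * L) +
    γ • LinearMap.mulLeftRight ℝ ((C + D * L)ᵀ, C + D * L)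

@[simp]
theorem closedLoopMap_apply (L : Matrix κ ι ℝ) (X : Matrix ι ι ℝ) :
    closedLoopMap γ A C B D L X =
      γ • ((A + B * L)ᵀ * X * (A + B * L)) + γ • ((C + D * L)ᵀ * X * (C + D * L)) :=
  rfl

def gainHessian (R : Matrix κ κ ℝ) (X : Matrix ι ι ℝ) : Matrix κ κ ℝ :=
  R + γ • (Bᵀ * X * B) + γ • (Dᵀ * X * D)

def gainCross (X : Matrix ι ι ℝ) : Matrix κ ι ℝ :=
  γ • (Bᵀ * X * A) + γ • (Dᵀ * X * C)

def improvedGain [DecidableEq κ] (R : Matrix κ κ ℝ) (X : Matrix ι ι ℝ) : Matrix κ ι ℝ :=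
  -((gainHessian γ B D R X)⁻¹ * gainCross γ A C B D X)

variable {γ}

theorem closedLoopMap_nonneg (hγ : 0 ≤ γ) (L : Matrix κ ι ℝ) {X : Matrix ι ι ℝ} (hX : 0 ≤ X) :
    0 ≤ closedLoopMap γ A C B D L X := by
  rw [nonneg_iff_posSemidef] at hX ⊢
  exact ((hX.transpose_mul_mul_same _).smul hγ).add ((hX.transpose_mul_mul_same _).smul hγ)

theorem closedLoopMap_add_cost_eq (R : Matrix κ κ ℝ) {X : Matrix ι ι ℝ} (hX : Xᵀ = X)
    (L : Matrix κ ι ℝ) :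
    closedLoopMap γ A C B D L X + Lᵀ * R * L =
      γ • (Aᵀ * X * A) + γ • (Cᵀ * X * C) + (Lᵀ * gainCross γ A C B D X +
        (gainCross γ A C B D X)ᵀ * L + Lᵀ * gainHessian γ B D R X * L) := by
  simp only [closedLoopMap_apply, gainCross, gainHessian, transpose_add, transpose_mul,
    transpose_smul, transpose_transpose, Matrix.add_mul, Matrix.mul_add, Matrix.mul_smul,
    Matrix.smul_mul, smul_add, Matrix.mul_assoc, hX]
  abel

theorem gainHessian_posDef {R : Matrix κ κ ℝ} (hR : R.PosDef) (hγ : 0 ≤ γ) {X : Matrix ι ι ℝ}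
    (hX : X.PosSemidef) : (gainHessian γ B D R X).PosDef :=
  (hR.add_posSemidef ((hX.transpose_mul_mul_same B).smul hγ)).add_posSemidef
    ((hX.transpose_mul_mul_same D).smul hγ)

theorem closedLoopMap_improvedGain_add_le [DecidableEq κ] {R : Matrix κ κ ℝ} (hR : R.PosDef)
    (hγ : 0 ≤ γ) {X : Matrix ι ι ℝ} (hX : X.PosSemidef) (L : Matrix κ ι ℝ) :
    closedLoopMap γ A C B D (improvedGain γ A C B D R X) X +
        (improvedGain γ A C B D R X)ᵀ * R * improvedGain γ A C B D R X ≤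
      closedLoopMap γ A C B D L X + Lᵀ * R * L := by
  have hM := gainHessian_posDef B D hR hγ hX
  have hML : gainHessian γ B D R X * improvedGain γ A C B D R X = -gainCross γ A C B D X := by
    rw [improvedGain, Matrix.mul_neg, ← Matrix.mul_assoc,
      mul_nonsing_inv _ ((isUnit_iff_isUnit_det _).1 hM.isUnit), Matrix.one_mul]
  have hXt : Xᵀ = X := by simpa using hX.isHermitian.eq
  have hMt : (gainHessian γ B D R X)ᵀ = gainHessian γ B D R X := by
    simpa using hM.isHermitian.eq
  rw [closedLoopMap_add_cost_eq A C B D R hXt, closedLoopMap_add_cost_eq A C B D R hXt,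
    complete_square_of_mul_eq_neg (L := L) hMt hML]
  exact add_le_add le_rfl <| le_add_of_nonneg_right <| nonneg_iff_posSemidef.2 <|
    hM.posSemidef.transpose_mul_mul_same (L - improvedGain γ A C B D R X)

end PolicyIteration

theorem stmt11_general {n m : ℕ} (A C : Matrix (Fin n) (Fin n) ℝ)
    (B D : Matrix (Fin n) (Fin m) ℝ)
    (Q : Matrix (Fin n) (Fin n) ℝ) (R : Matrix (Fin m) (Fin m) ℝ) (γ : ℝ)
    (hQ : Q.PosDef) (hR : R.PosDef) (hγ0 : 0 ≤ γ)
    (L : ℕ → Matrix (Fin m) (Fin n) ℝ) (P : ℕ → Matrix (Fin n) (Fin n) ℝ)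
    (hPpd : ∀ i, (P i).PosDef)
    (hsle : ∀ i, P i = γ • ((A + B * L i)ᵀ * P i * (A + B * L i)) +
      γ • ((C + D * L i)ᵀ * P i * (C + D * L i)) + (L i)ᵀ * R * (L i) + Q)
    (hupd : ∀ i, L (i + 1) = -((R + γ • (Bᵀ * P i * B) + γ • (Dᵀ * P i * D))⁻¹ *
      (γ • (Bᵀ * P i * A) + γ • (Dᵀ * P i * C)))) :
    ∀ i, (P i - P (i + 1)).PosSemidef := by
  intro i
  set g := closedLoopMap γ A C B D (L (i + 1))
  have hcost : P (i + 1) - g (P (i + 1)) = (L (i + 1))ᵀ * R * L (i + 1) + Q := by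
    rw [sub_eq_iff_eq_add', ← add_assoc]; exact hsle (i + 1)
  have himprove : g (P i) + (L (i + 1))ᵀ * R * L (i + 1) + Q ≤ P i := by
    have h := closedLoopMap_improvedGain_add_le A C B D hR hγ0 (hPpd i).posSemidef (L i)
    rw [← show L (i + 1) = improvedGain γ A C B D R (P i) from hupd i] at h
    calc _ ≤ closedLoopMap γ A C B D (L i) (P i) + (L i)ᵀ * R * L i + Q := add_le_add h le_rfl
      _ = P i := (hsle i).symm
  have hgΔ : g (P i - P (i + 1)) ≤ P i - P (i + 1) := by
    have hsplit : P i - P (i + 1) - (g (P i) - g (P (i + 1))) =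
        P i - (g (P i) + (L (i + 1))ᵀ * R * L (i + 1) + Q) := by
      rw [add_assoc, ← hcost]; abel
    rwa [← sub_nonneg, map_sub, hsplit, sub_nonneg]
  have hPg : (P (i + 1) - g (P (i + 1))).PosDef :=
    hcost ▸ hQ.posSemidef_add (hR.posSemidef.transpose_mul_mul_same _)
  exact nonneg_iff_posSemidef.1 <|
    nonneg_of_map_le_self (fun _ ↦ closedLoopMap_nonneg A C B D hγ0 _) (hPpd (i + 1)) hPg
      ((hPpd i).isHermitian.sub (hPpd (i + 1)).isHermitian) hgΔ

theorem stmt11 {n m : ℕ} (A C : Matrix (Fin n) (Fin n) ℝ)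
    (B D : Matrix (Fin n) (Fin m) ℝ)
    (Q : Matrix (Fin n) (Fin n) ℝ) (R : Matrix (Fin m) (Fin m) ℝ) (γ : ℝ)
    (hQ : Q.PosDef) (hR : R.PosDef) (hγ0 : 0 ≤ γ) (hγ1 : γ < 1)
    (L : ℕ → Matrix (Fin m) (Fin n) ℝ) (P : ℕ → Matrix (Fin n) (Fin n) ℝ)
    (hPpd : ∀ i, (P i).PosDef)
    (hsle : ∀ i, P i = γ • ((A + B * L i)ᵀ * P i * (A + B * L i)) +
      γ • ((C + D * L i)ᵀ * P i * (C + D * L i)) + (L i)ᵀ * R * (L i) + Q)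
    (hupd : ∀ i, L (i + 1) = -((R + γ • (Bᵀ * P i * B) + γ • (Dᵀ * P i * D))⁻¹ *
      (γ • (Bᵀ * P i * A) + γ • (Dᵀ * P i * C)))) :
    ∀ i, (P i - P (i + 1)).PosSemidef :=
  stmt11_general A C B D Q R γ hQ hR hγ0 L P hPpd hsle hupd
end

section
/- Let A, C ∈ ℝ^{n×n}, B, D ∈ ℝ^{n×m}, let Q ∈ ℝ^{n×n} and R ∈ ℝ^{m×m} be symmetric positive definite, and let γ ∈ [0,1). Let (L_i)_{i≥0} and symmetric positive definite (P_i)_{i≥0} satisfy the policy-iteration recursion: P_i = γ(A+BL_i)ᵀP_i(A+BL_i) + γ(C+DL_i)ᵀP_i(C+DL_i) + L_iᵀRL_i + Q and L_{i+1} = −(R + γBᵀP_iB + γDᵀP_iD)⁻¹(γBᵀP_iA + γDᵀP_iC) for all i. Suppose P* is the unique symmetric positive definite solution of the stochastic algebraic Riccati equation P* = Q + γAᵀP*A + γCᵀP*C − (γAᵀP*B + γCᵀP*D)(R + γBᵀP*B + γDᵀP*D)⁻¹(γBᵀP*A + γDᵀP*C), and let L* = −(R + γBᵀP*B + γDᵀP*D)⁻¹(γBᵀP*A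 + γDᵀP*C). Then P_i converges to P* and L_i converges to L* as i → ∞. -/
/-!
Completing the square in the gain: for symmetric `X`, with `H(X) = R + γBᵀXB + γDᵀXD ≻ 0` and
`K(X)` the policy-improvement gain, the Lyapunov operator of any gain `L` equals the Riccati
operator plus `(L - K(X))ᵀ H(X) (L - K(X))`. Applied to `P i` and `L i` this gives
`P i = lyap_{L (i+1)} (P i) + (psd)`, so `Δ = P (i+1) - P i` satisfies `Δ ≤ T Δ` for the positive
closed-loop map `T` of `L (i+1)`. Since `P (i+1) ≻ 0` and `P (i+1) - T (P (i+1)) ≻ 0`, a maximal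
generalized Rayleigh quotient `xᵀΔx / xᵀP(i+1)x` cannot be positive, whence `Δ ≤ 0`. The sequence
`P i` is therefore antitone and `≥ 0` in the Loewner order, so it converges (by polarization of the
quadratic forms). By continuity the limit solves the Lyapunov equation of its own improved gain,
i.e. the Riccati equation, and is positive definite, so it is `Pstar`; the gains follow.
-/

open Matrix Filter Topology
open scoped MatrixOrder

namespace Matrix

theorem complete_square {ι κ α : Type*} [Fintype κ] [DecidableEq κ] [CommRing α]
    {S : Matrix κ κ α} (hS : S.IsSymm) (hdet : IsUnit S.det) (L Y : Matrix κ ι α) :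
    Lᵀ * S * L + Lᵀ * Y + Yᵀ * L = (L + S⁻¹ * Y)ᵀ * S * (L + S⁻¹ * Y) - Yᵀ * S⁻¹ * Y := by
  have hSinv : S⁻¹ᵀ = S⁻¹ := by rw [transpose_nonsing_inv, hS.eq]
  simp only [transpose_add, transpose_mul, hSinv, Matrix.add_mul, Matrix.mul_add,
    Matrix.mul_assoc, mul_nonsing_inv_cancel_left _ _ hdet, nonsing_inv_mul_cancel_left _ _ hdet]
  abel

variable {ι : Type*} [Fintype ι]

lemma dotProduct_mulVec_le_of_le {A B : Matrix ι ι ℝ} (h : A ≤ B) (x : ι → ℝ) :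
    x ⬝ᵥ A *ᵥ x ≤ x ⬝ᵥ B *ᵥ x := by
  have := (le_iff.mp h).dotProduct_mulVec_nonneg x
  rw [star_trivial, sub_mulVec, dotProduct_sub] at this
  linarith

lemma smul_dotProduct_mulVec_smul (M : Matrix ι ι ℝ) (t : ℝ) (x : ι → ℝ) :
    (t • x) ⬝ᵥ M *ᵥ (t • x) = t ^ 2 * (x ⬝ᵥ M *ᵥ x) := by
  simp only [mulVec_smul, smul_dotProduct, dotProduct_smul, smul_eq_mul]
  ring

theorem exists_le_smul_of_posDef [Nonempty ι] {P Δ : Matrix ι ι ℝ} (hP : P.PosDef)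
    (hΔ : Δ.IsHermitian) :
    ∃ c : ℝ, Δ ≤ c • P ∧ ∃ x ≠ 0, x ⬝ᵥ Δ *ᵥ x = c * (x ⬝ᵥ P *ᵥ x) := by
  have hPx : ∀ x ≠ 0, 0 < x ⬝ᵥ P *ᵥ x := fun x hx => by
    simpa using hP.dotProduct_mulVec_pos hx
  let ratio (x : ι → ℝ) : ℝ := x ⬝ᵥ Δ *ᵥ x / x ⬝ᵥ P *ᵥ x
  have hsphere : ∀ x ∈ Metric.sphere (0 : ι → ℝ) 1, x ≠ 0 := fun x hx h => by
    simp [h] at hx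
  have hcont : ContinuousOn ratio (Metric.sphere 0 1) :=
    ContinuousOn.div (by fun_prop) (by fun_prop) fun x hx => (hPx x (hsphere x hx)).ne'
  obtain ⟨x₀, hx₀, hmax⟩ := (isCompact_sphere (0 : ι → ℝ) 1).exists_isMaxOn
    (NormedSpace.sphere_nonempty.mpr zero_le_one) hcont
  refine ⟨ratio x₀, ?_, x₀, hsphere x₀ hx₀, (div_mul_cancel₀ _ (hPx x₀ (hsphere x₀ hx₀)).ne').symm⟩
  refine PosSemidef.of_dotProduct_mulVec_nonneg ((hP.1.smul (IsSelfAdjoint.all _)).sub hΔ)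
    fun x => ?_
  rw [star_trivial, sub_mulVec, dotProduct_sub, smul_mulVec, dotProduct_smul, smul_eq_mul,
    sub_nonneg]
  rcases eq_or_ne x 0 with rfl | hx
  · simp
  have hscale : ratio (‖x‖⁻¹ • x) = ratio x := by
    simp only [ratio, smul_dotProduct_mulVec_smul]
    exact mul_div_mul_left _ _ (by positivity)
  have hle : ratio x ≤ ratio x₀ := hscale ▸ hmax (by simp [norm_smul, hx])
  rwa [div_le_iff₀ (hPx x hx)] at hle

theorem nonpos_of_le_apply_of_posDef_sub {T : Matrix ι ι ℝ →ₗ[ℝ] Matrix ι ι ℝ} (hT : Monotone T)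
    {P Δ : Matrix ι ι ℝ} (hP : P.PosDef) (hPT : (P - T P).PosDef) (hΔ : Δ.IsHermitian)
    (hΔT : Δ ≤ T Δ) : Δ ≤ 0 := by
  cases isEmpty_or_nonempty ι
  · exact (Subsingleton.elim Δ 0).le
  obtain ⟨c, hΔc, x, hx, hxc⟩ := exists_le_smul_of_posDef hP hΔ
  rcases le_or_gt c 0 with hc | hc
  · refine hΔc.trans ?_
    simpa [le_iff, ← neg_smul] using hP.posSemidef.smul (neg_nonneg.mpr hc)
  -- at `x`: `c xᵀPx = xᵀΔx ≤ xᵀ(TΔ)x ≤ c xᵀ(TP)x < c xᵀPx`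
  have h1 := dotProduct_mulVec_le_of_le hΔT x
  have h2 := dotProduct_mulVec_le_of_le ((hT hΔc).trans_eq (T.map_smul c P)) x
  have h3 := hPT.dotProduct_mulVec_pos hx
  simp only [star_trivial, sub_mulVec, dotProduct_sub, smul_mulVec, dotProduct_smul,
    smul_eq_mul] at h2 h3
  nlinarith

lemma IsHermitian.apply_eq_polarization [DecidableEq ι] {M : Matrix ι ι ℝ} (hM : M.IsHermitian)
    (j k : ι) :
    M j k = ((Pi.single j 1 + Pi.single k 1) ⬝ᵥ M *ᵥ (Pi.single j 1 + Pi.single k 1)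
      - Pi.single j 1 ⬝ᵥ M *ᵥ Pi.single j 1 - Pi.single k 1 ⬝ᵥ M *ᵥ Pi.single k 1) / 2 := by
  have hkj : M k j = M j k := by simpa using congrFun (congrFun hM j) k
  simp [mulVec_add, dotProduct_add, add_dotProduct, hkj]
  ring

theorem exists_tendsto_of_antitone {M : ℕ → Matrix ι ι ℝ} (hM : Antitone M)
    (h0 : ∀ i, 0 ≤ M i) : ∃ L, Tendsto M atTop (𝓝 L) := by
  classical
  have hq : ∀ x, ∃ a, Tendsto (fun i => x ⬝ᵥ M i *ᵥ x) atTop (𝓝 a) := fun x =>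
    ⟨_, tendsto_atTop_ciInf (fun _ _ hij => dotProduct_mulVec_le_of_le (hM hij) x)
      ⟨0, by rintro _ ⟨i, rfl⟩; simpa using (h0 i).posSemidef.dotProduct_mulVec_nonneg x⟩⟩
  choose q hq using hq
  refine ⟨of fun j k => (q (Pi.single j 1 + Pi.single k 1) - q (Pi.single j 1)
    - q (Pi.single k 1)) / 2, tendsto_pi_nhds.2 fun j => tendsto_pi_nhds.2 fun k => ?_⟩
  simp_rw [fun i => (h0 i).posSemidef.isHermitian.apply_eq_polarization j k]
  exact (((hq _).sub (hq _)).sub (hq _)).div_const 2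

lemma isClosed_setOf_posSemidef_s13 : IsClosed {M : Matrix ι ι ℝ | M.PosSemidef} := by
  simp only [posSemidef_iff_dotProduct_mulVec, Set.ofPred_and, Set.ofPred_forall]
  exact (isClosed_eq (by fun_prop) continuous_id).inter
    (isClosed_iInter fun x => isClosed_le continuous_const (by fun_prop))

instance : OrderClosedTopology (Matrix ι ι ℝ) :=
  ⟨isClosed_setOf_posSemidef_s13.preimage (continuous_snd.sub continuous_fst)⟩

end Matrix

/-- Data of `x_{k+1} = A x + B u + (C x + D u) d + w` with stage cost `xᵀQx + uᵀRu` and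
discount `γ`. -/
structure StochasticLQR (ι κ : Type*) where
  A : Matrix ι ι ℝ
  C : Matrix ι ι ℝ
  B : Matrix ι κ ℝ
  D : Matrix ι κ ℝ
  Q : Matrix ι ι ℝ
  R : Matrix κ κ ℝ
  γ : ℝ

namespace StochasticLQR

variable {ι κ : Type*} [Fintype ι] (S : StochasticLQR ι κ)

def crossTerm (X : Matrix ι ι ℝ) : Matrix κ ι ℝ :=
  S.γ • (S.Bᵀ * X * S.A) + S.γ • (S.Dᵀ * X * S.C)

lemma crossTerm_transpose {X : Matrix ι ι ℝ} (hX : X.IsHermitian) :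
    (S.crossTerm X)ᵀ = S.γ • (S.Aᵀ * X * S.B) + S.γ • (S.Cᵀ * X * S.D) := by
  simp [crossTerm, (isHermitian_iff_isSymm.mp hX).eq, Matrix.mul_assoc]

variable [Fintype κ]

def closedLoop (L : Matrix κ ι ℝ) : Matrix ι ι ℝ →ₗ[ℝ] Matrix ι ι ℝ where
  toFun X := S.γ • ((S.A + S.B * L)ᵀ * X * (S.A + S.B * L)) +
    S.γ • ((S.C + S.D * L)ᵀ * X * (S.C + S.D * L))
  map_add' X Y := by simp only [Matrix.mul_add, Matrix.add_mul, smul_add]; abel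
  map_smul' c X := by
    simp only [Matrix.mul_smul, Matrix.smul_mul, smul_add, RingHom.id_apply, smul_smul, mul_comm]

def lyapunovMap (L : Matrix κ ι ℝ) (X : Matrix ι ι ℝ) : Matrix ι ι ℝ :=
  S.closedLoop L X + Lᵀ * S.R * L + S.Q

def inputHessian (X : Matrix ι ι ℝ) : Matrix κ κ ℝ :=
  S.R + S.γ • (S.Bᵀ * X * S.B) + S.γ • (S.Dᵀ * X * S.D)

lemma lyapunovMap_eq (L : Matrix κ ι ℝ) (X : Matrix ι ι ℝ) :
    S.lyapunovMap L X = S.γ • (S.Aᵀ * X * S.A) + S.γ • (S.Cᵀ * X * S.C) + S.Q +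
      (Lᵀ * S.inputHessian X * L + Lᵀ * S.crossTerm X +
        (S.γ • (S.Aᵀ * X * S.B) + S.γ • (S.Cᵀ * X * S.D)) * L) := by
  simp only [lyapunovMap, closedLoop, inputHessian, crossTerm, LinearMap.coe_mk, AddHom.coe_mk,
    transpose_add, transpose_mul, Matrix.add_mul, Matrix.mul_add, Matrix.mul_assoc,
    Matrix.mul_smul, Matrix.smul_mul, smul_add]
  abel

lemma inputHessian_posDef (hγ : 0 ≤ S.γ) (hR : S.R.PosDef) {X : Matrix ι ι ℝ}
    (hX : X.PosSemidef) : (S.inputHessian X).PosDef := by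
  have h : ∀ E : Matrix ι κ ℝ, (S.γ • (Eᵀ * X * E)).PosSemidef := fun E => by
    simpa using (hX.conjTranspose_mul_mul_same E).smul hγ
  exact (hR.add_posSemidef (h _)).add_posSemidef (h _)

lemma closedLoop_monotone (hγ : 0 ≤ S.γ) (L : Matrix κ ι ℝ) : Monotone (S.closedLoop L) := by
  intro X Y hXY
  rw [le_iff, ← map_sub]
  have h : ∀ E : Matrix ι ι ℝ, (S.γ • (Eᵀ * (Y - X) * E)).PosSemidef := fun E => by
    simpa using ((le_iff.mp hXY).conjTranspose_mul_mul_same E).smul hγ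
  exact (h _).add (h _)

lemma posDef_lyapunovMap_sub_closedLoop (hQ : S.Q.PosDef) (hR : S.R.PosSemidef)
    (L : Matrix κ ι ℝ) (X : Matrix ι ι ℝ) : (S.lyapunovMap L X - S.closedLoop L X).PosDef := by
  rw [lyapunovMap, add_assoc, add_sub_cancel_left]
  exact PosDef.posSemidef_add (by simpa using hR.conjTranspose_mul_mul_same L) hQ

lemma posDef_lyapunovMap (hγ : 0 ≤ S.γ) (hQ : S.Q.PosDef) (hR : S.R.PosSemidef)
    (L : Matrix κ ι ℝ) {X : Matrix ι ι ℝ} (hX : 0 ≤ X) : (S.lyapunovMap L X).PosDef := by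
  have hT : 0 ≤ S.closedLoop L X := map_zero (S.closedLoop L) ▸ S.closedLoop_monotone hγ L hX
  simpa using PosDef.posSemidef_add hT.posSemidef (S.posDef_lyapunovMap_sub_closedLoop hQ hR L X)

lemma continuous_lyapunovMap :
    Continuous fun p : Matrix κ ι ℝ × Matrix ι ι ℝ => S.lyapunovMap p.1 p.2 := by
  simp only [lyapunovMap, closedLoop, LinearMap.coe_mk, AddHom.coe_mk]
  fun_prop

variable [DecidableEq κ]

noncomputable def improvedGain (X : Matrix ι ι ℝ) : Matrix κ ι ℝ :=
  -((S.inputHessian X)⁻¹ * S.crossTerm X)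

noncomputable def riccatiMap (X : Matrix ι ι ℝ) : Matrix ι ι ℝ :=
  S.Q + S.γ • (S.Aᵀ * X * S.A) + S.γ • (S.Cᵀ * X * S.C) -
    (S.γ • (S.Aᵀ * X * S.B) + S.γ • (S.Cᵀ * X * S.D)) * (S.inputHessian X)⁻¹ * S.crossTerm X

lemma lyapunovMap_eq_riccatiMap_add {X : Matrix ι ι ℝ} (hX : X.IsHermitian)
    (hH : (S.inputHessian X).PosDef) (L : Matrix κ ι ℝ) :
    S.lyapunovMap L X = S.riccatiMap X +
      (L - S.improvedGain X)ᵀ * S.inputHessian X * (L - S.improvedGain X) := by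
  rw [lyapunovMap_eq, ← S.crossTerm_transpose hX, complete_square
    (isHermitian_iff_isSymm.mp hH.1) ((isUnit_iff_isUnit_det _).mp hH.isUnit), riccatiMap,
    improvedGain, sub_neg_eq_add, S.crossTerm_transpose hX]
  abel

lemma riccatiMap_eq_lyapunovMap_improvedGain {X : Matrix ι ι ℝ} (hX : X.IsHermitian)
    (hH : (S.inputHessian X).PosDef) : S.riccatiMap X = S.lyapunovMap (S.improvedGain X) X := by
  simp [S.lyapunovMap_eq_riccatiMap_add hX hH]

lemma lyapunovMap_eq_lyapunovMap_improvedGain_add {X : Matrix ι ι ℝ} (hX : X.IsHermitian)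
    (hH : (S.inputHessian X).PosDef) (L : Matrix κ ι ℝ) :
    S.lyapunovMap L X = S.lyapunovMap (S.improvedGain X) X +
      (L - S.improvedGain X)ᵀ * S.inputHessian X * (L - S.improvedGain X) := by
  rw [← S.riccatiMap_eq_lyapunovMap_improvedGain hX hH, S.lyapunovMap_eq_riccatiMap_add hX hH]

theorem le_of_eq_lyapunovMap_improvedGain (hγ : 0 ≤ S.γ) (hQ : S.Q.PosDef) (hR : S.R.PosDef)
    {L : Matrix κ ι ℝ} {X X' : Matrix ι ι ℝ} (hX : X.PosSemidef) (hX' : X'.PosDef)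
    (hXL : X = S.lyapunovMap L X) (hX'K : X' = S.lyapunovMap (S.improvedGain X) X') :
    X' ≤ X := by
  set K := S.improvedGain X
  have hH := S.inputHessian_posDef hγ hR hX
  have hXK : X = S.lyapunovMap K X + (L - K)ᵀ * S.inputHessian X * (L - K) :=
    hXL.trans (S.lyapunovMap_eq_lyapunovMap_improvedGain_add hX.1 hH L)
  have hgap : S.closedLoop K (X' - X) - (X' - X) = (L - K)ᵀ * S.inputHessian X * (L - K) := by
    rw [lyapunovMap] at hXK hX'K
    rw [map_sub]
    linear_combination (norm := module) hXK - hX'K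
  have hle : X' - X ≤ S.closedLoop K (X' - X) :=
    le_iff.mpr (hgap ▸ by simpa using hH.posSemidef.conjTranspose_mul_mul_same (L - K))
  have hPT := S.posDef_lyapunovMap_sub_closedLoop hQ hR.posSemidef K X'
  rw [← hX'K] at hPT
  exact sub_nonpos.mp
    (nonpos_of_le_apply_of_posDef_sub (S.closedLoop_monotone hγ K) hX' hPT (hX'.1.sub hX.1) hle)

lemma continuousAt_improvedGain {X : Matrix ι ι ℝ} (hH : (S.inputHessian X).PosDef) :
    ContinuousAt S.improvedGain X := by
  have hinv : ContinuousAt Inv.inv (S.inputHessian X) :=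
    continuousAt_matrix_inv _ (NormedRing.inverse_continuousAt (Units.mk0 _ hH.det_pos.ne'))
  have hH : Continuous S.inputHessian := by unfold inputHessian; fun_prop
  have hY : Continuous S.crossTerm := by unfold crossTerm; fun_prop
  have hmul : Continuous fun p : Matrix κ κ ℝ × Matrix κ ι ℝ => p.1 * p.2 := by fun_prop
  exact (hmul.continuousAt.comp ((hinv.comp hH.continuousAt).prodMk hY.continuousAt)).neg

end StochasticLQR

open StochasticLQR

theorem stmt13_general {n m : ℕ} (A C : Matrix (Fin n) (Fin n) ℝ)
    (B D : Matrix (Fin n) (Fin m) ℝ)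
    (Q : Matrix (Fin n) (Fin n) ℝ) (R : Matrix (Fin m) (Fin m) ℝ) (γ : ℝ)
    (hQ : Q.PosDef) (hR : R.PosDef) (hγ0 : 0 ≤ γ)
    (L : ℕ → Matrix (Fin m) (Fin n) ℝ) (P : ℕ → Matrix (Fin n) (Fin n) ℝ)
    (hPpd : ∀ i, (P i).PosDef)
    (hsle : ∀ i, P i = γ • ((A + B * L i)ᵀ * P i * (A + B * L i)) +
      γ • ((C + D * L i)ᵀ * P i * (C + D * L i)) + (L i)ᵀ * R * (L i) + Q)
    (hupd : ∀ i, L (i + 1) = -((R + γ • (Bᵀ * P i * B) + γ • (Dᵀ * P i * D))⁻¹ *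
      (γ • (Bᵀ * P i * A) + γ • (Dᵀ * P i * C))))
    (Pstar : Matrix (Fin n) (Fin n) ℝ)
    (huniq : ∀ P' : Matrix (Fin n) (Fin n) ℝ, P'.PosDef →
      P' = Q + γ • (Aᵀ * P' * A) + γ • (Cᵀ * P' * C) -
        (γ • (Aᵀ * P' * B) + γ • (Cᵀ * P' * D)) *
          (R + γ • (Bᵀ * P' * B) + γ • (Dᵀ * P' * D))⁻¹ *
          (γ • (Bᵀ * P' * A) + γ • (Dᵀ * P' * C)) → P' = Pstar)
    (Lstar : Matrix (Fin m) (Fin n) ℝ)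
    (hLstar : Lstar = -((R + γ • (Bᵀ * Pstar * B) + γ • (Dᵀ * Pstar * D))⁻¹ *
      (γ • (Bᵀ * Pstar * A) + γ • (Dᵀ * Pstar * C)))) :
    Tendsto P atTop (𝓝 Pstar) ∧ Tendsto L atTop (𝓝 Lstar) := by
  let S : StochasticLQR (Fin n) (Fin m) := ⟨A, C, B, D, Q, R, γ⟩
  have hlyap : ∀ i, P i = S.lyapunovMap (L i) (P i) := hsle
  have hgain : ∀ i, L (i + 1) = S.improvedGain (P i) := hupd
  have hanti : Antitone P := antitone_nat_of_succ_le fun i =>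
    S.le_of_eq_lyapunovMap_improvedGain hγ0 hQ hR (hPpd i).posSemidef (hPpd (i + 1)) (hlyap i)
      (hgain i ▸ hlyap (i + 1))
  obtain ⟨P', hP'⟩ := exists_tendsto_of_antitone hanti fun i => (hPpd i).posSemidef.nonneg
  have hP'0 : 0 ≤ P' := ge_of_tendsto' hP' fun i => (hPpd i).posSemidef.nonneg
  have hH := S.inputHessian_posDef hγ0 hR hP'0.posSemidef
  have hL : Tendsto (fun i => L (i + 1)) atTop (𝓝 (S.improvedGain P')) := by
    simpa only [hgain, Function.comp_def] using (S.continuousAt_improvedGain hH).tendsto.comp hP'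
  have hP'1 : Tendsto (fun i => P (i + 1)) atTop (𝓝 P') := hP'.comp (tendsto_add_atTop_nat 1)
  have hfix : P' = S.lyapunovMap (S.improvedGain P') P' := by
    refine tendsto_nhds_unique hP'1 ?_
    simpa only [Function.comp_def, ← hlyap] using
      (S.continuous_lyapunovMap.tendsto _).comp (hL.prodMk_nhds hP'1)
  have hpd : P'.PosDef := hfix ▸ S.posDef_lyapunovMap hγ0 hQ hR.posSemidef _ hP'0
  obtain rfl : P' = Pstar :=
    huniq P' hpd (hfix.trans (S.riccatiMap_eq_lyapunovMap_improvedGain hpd.1 hH).symm)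
  exact ⟨hP', (tendsto_add_atTop_iff_nat 1).mp (hLstar ▸ hL)⟩

theorem stmt13 {n m : ℕ} (A C : Matrix (Fin n) (Fin n) ℝ)
    (B D : Matrix (Fin n) (Fin m) ℝ)
    (Q : Matrix (Fin n) (Fin n) ℝ) (R : Matrix (Fin m) (Fin m) ℝ) (γ : ℝ)
    (hQ : Q.PosDef) (hR : R.PosDef) (hγ0 : 0 ≤ γ) (hγ1 : γ < 1)
    (L : ℕ → Matrix (Fin m) (Fin n) ℝ) (P : ℕ → Matrix (Fin n) (Fin n) ℝ)
    (hPpd : ∀ i, (P i).PosDef)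
    (hsle : ∀ i, P i = γ • ((A + B * L i)ᵀ * P i * (A + B * L i)) +
      γ • ((C + D * L i)ᵀ * P i * (C + D * L i)) + (L i)ᵀ * R * (L i) + Q)
    (hupd : ∀ i, L (i + 1) = -((R + γ • (Bᵀ * P i * B) + γ • (Dᵀ * P i * D))⁻¹ *
      (γ • (Bᵀ * P i * A) + γ • (Dᵀ * P i * C))))
    (Pstar : Matrix (Fin n) (Fin n) ℝ) (hPstar : Pstar.PosDef)
    (hsare : Pstar = Q + γ • (Aᵀ * Pstar * A) + γ • (Cᵀ * Pstar * C) -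
      (γ • (Aᵀ * Pstar * B) + γ • (Cᵀ * Pstar * D)) *
        (R + γ • (Bᵀ * Pstar * B) + γ • (Dᵀ * Pstar * D))⁻¹ *
        (γ • (Bᵀ * Pstar * A) + γ • (Dᵀ * Pstar * C)))
    (huniq : ∀ P' : Matrix (Fin n) (Fin n) ℝ, P'.PosDef →
      P' = Q + γ • (Aᵀ * P' * A) + γ • (Cᵀ * P' * C) -
        (γ • (Aᵀ * P' * B) + γ • (Cᵀ * P' * D)) *
          (R + γ • (Bᵀ * P' * B) + γ • (Dᵀ * P' * D))⁻¹ *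
          (γ • (Bᵀ * P' * A) + γ • (Dᵀ * P' * C)) → P' = Pstar)
    (Lstar : Matrix (Fin m) (Fin n) ℝ)
    (hLstar : Lstar = -((R + γ • (Bᵀ * Pstar * B) + γ • (Dᵀ * Pstar * D))⁻¹ *
      (γ • (Bᵀ * Pstar * A) + γ • (Dᵀ * Pstar * C)))) :
    Tendsto P atTop (𝓝 Pstar) ∧ Tendsto L atTop (𝓝 Lstar) :=
  stmt13_general A C B D Q R γ hQ hR hγ0 L P hPpd hsle hupd Pstar huniq Lstar hLstar
end

section
/- Let A, C ∈ ℝ^{n×n}, B, D ∈ ℝ^{n×m}, let Q ∈ ℝ^{n×n} and R ∈ ℝ^{m×m} be symmetric positive definite, and let γ ∈ [0,1). Let (L_i)_{i≥0} and symmetric positive definite (P_i)_{i≥0} satisfy the policy-iteration recursion: P_i = γ(A+BL_i)ᵀP_i(A+BL_i) + γ(C+DL_i)ᵀP_i(C+DL_i) + L_iᵀRL_i + Q and L_{i+1} = −(R + γBᵀP_iB + γDᵀP_iD)⁻¹(γBᵀP_iA + γDᵀP_iC) for all i. For each i define the Q-function kernel H_i as the block matrix with blocks (H_i)_xx = Q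 + γAᵀP_iA + γCᵀP_iC, (H_i)_xu = γ(AᵀP_iB + CᵀP_iD) = (H_i)_uxᵀ, (H_i)_uu = R + γBᵀP_iB + γDᵀP_iD, and define H* analogously from the unique symmetric positive definite solution P* of the stochastic algebraic Riccati equation P* = Q + γAᵀP*A + γCᵀP*C − (γAᵀP*B + γCᵀP*D)(R + γBᵀP*B + γDᵀP*D)⁻¹(γBᵀP*A + γDᵀP*C). Then H_i converges to H* and L_i converges to L* = −(H*_uu)⁻¹ H*_ux as i → ∞. -/
/-!
Policy iteration is monotone. Completing the square in the policy-evaluation equation shows that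
`Δ = P i - P (i + 1)` solves the Lyapunov equation `Δ = T Δ + W` of the closed loop `T` of the
improved gain `L (i + 1)`, with `W ⪰ 0`; since `P (i + 1) = T (P (i + 1)) + (Lᵀ R L + Q)` with
`Q ≻ 0`, the iterates of the positive map `T` decay geometrically, which forces `Δ ⪰ 0`.
A decreasing sequence of positive semidefinite matrices converges. Because `R ≻ 0` keeps `H_uu`
invertible, the greedy gain depends continuously on `P`, so the limit is a positive definite
solution of the SARE, hence `P*` by uniqueness, and `H i` and `L i` converge along with `P i`.
-/

open Matrix Filter Topology
open scoped MatrixOrder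

namespace Matrix

variable {k l : Type*} [Fintype k]

lemma PosSemidef.transpose_mul_mul_same_s17 [Fintype l] {X : Matrix k k ℝ} (hX : X.PosSemidef)
    (E : Matrix k l ℝ) :
    (Eᵀ * X * E).PosSemidef := by
  simpa using hX.conjTranspose_mul_mul_same E

lemma isClosed_setOf_nonneg : IsClosed {X : Matrix k k ℝ | 0 ≤ X} := by
  have : {X : Matrix k k ℝ | 0 ≤ X} = {X | Xᴴ = X} ∩ ⋂ x : k → ℝ, {X | 0 ≤ x ⬝ᵥ X *ᵥ x} := by
    ext X
    simp [nonneg_iff_posSemidef, posSemidef_iff_dotProduct_mulVec, IsHermitian]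
  rw [this]
  exact (isClosed_eq (by fun_prop) continuous_id).inter
    (isClosed_iInter fun x => isClosed_le continuous_const (by fun_prop))

lemma IsHermitian.apply_eq_polar [DecidableEq k] {X : Matrix k k ℝ} (hX : X.IsHermitian)
    (i j : k) :
    X i j = ((Pi.single i 1 + Pi.single j 1) ⬝ᵥ X *ᵥ (Pi.single i 1 + Pi.single j 1)
      - Pi.single i 1 ⬝ᵥ X *ᵥ Pi.single i 1 - Pi.single j 1 ⬝ᵥ X *ᵥ Pi.single j 1) / 2 := by
  have hji : X j i = X i j := by simpa using congrFun (congrFun hX i) j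
  simp [mulVec_add, dotProduct_add, add_dotProduct, hji]
  ring

theorem exists_tendsto_of_antitone_s17 [DecidableEq k] {P : ℕ → Matrix k k ℝ} (hanti : Antitone P)
    (hP : ∀ i, 0 ≤ P i) : ∃ X, Tendsto P atTop (𝓝 X) := by
  have hq : ∀ x : k → ℝ, ∃ a, Tendsto (fun i => x ⬝ᵥ P i *ᵥ x) atTop (𝓝 a) := fun x =>
    ⟨_, tendsto_atTop_ciInf (fun i j hij => by
      simpa [sub_mulVec] using (le_iff.1 (hanti hij)).dotProduct_mulVec_nonneg x)
      ⟨0, by rintro _ ⟨i, rfl⟩; simpa using (hP i).posSemidef.dotProduct_mulVec_nonneg x⟩⟩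
  choose a ha using hq
  refine ⟨of fun i j =>
      (a (Pi.single i 1 + Pi.single j 1) - a (Pi.single i 1) - a (Pi.single j 1)) / 2,
    tendsto_pi_nhds.2 fun i => tendsto_pi_nhds.2 fun j => ?_⟩
  simp_rw [fun n => (hP n).posSemidef.isHermitian.apply_eq_polar i j]
  exact (((ha _).sub (ha _)).sub (ha _)).div_const 2

lemma exists_le_smul_of_posDef_s17 [DecidableEq k] {S M : Matrix k k ℝ} (hS : S.PosDef)
    (hM : M.IsHermitian) :
    ∃ c : ℝ, 1 ≤ c ∧ M ≤ c • S := by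
  cases isEmpty_or_nonempty k
  · exact ⟨1, le_rfl, (Subsingleton.elim M _).le⟩
  obtain ⟨r, hr, hrS⟩ := (CFC.exists_pos_algebraMap_le_iff hS.isHermitian.isSelfAdjoint).2
    fun x hx => hS.isStrictlyPositive.spectrum_pos hx
  obtain ⟨t, ht⟩ := (finite_real_spectrum (A := M)).bddAbove
  have hMt : M ≤ algebraMap ℝ _ (max t r) :=
    le_algebraMap_of_spectrum_le (fun x hx => (ht hx).trans (le_max_left t r)) hM.isSelfAdjoint
  refine ⟨max t r / r, (one_le_div hr).2 (le_max_right t r), hMt.trans ?_⟩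
  calc algebraMap ℝ (Matrix k k ℝ) (max t r) = (max t r / r) • algebraMap ℝ _ r := by
        rw [Algebra.algebraMap_eq_smul_one, Algebra.algebraMap_eq_smul_one, smul_smul,
          div_mul_cancel₀ _ hr.ne']
    _ ≤ (max t r / r) • S := smul_le_smul_of_nonneg_left hrS (by positivity)

/-- From `S ≥ P / a` one gets `T P ≤ (1 - 1/a) P`, so `Tᴺ P → 0`; and `Δ ≥ Tᴺ Δ ≥ -c Tᴺ P`. -/
theorem nonneg_of_eq_map_add [DecidableEq k] {T : Module.End ℝ (Matrix k k ℝ)}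
    (hT : Monotone T) {P S Δ W : Matrix k k ℝ} (hP : P.PosDef) (hS : S.PosDef)
    (hPS : P = T P + S) (hΔ : Δ.IsHermitian) (hW : 0 ≤ W) (hΔW : Δ = T Δ + W) : 0 ≤ Δ := by
  obtain ⟨a, ha, hPa⟩ := exists_le_smul_of_posDef_s17 hS hP.isHermitian
  obtain ⟨c, hc, hΔc⟩ := exists_le_smul_of_posDef_s17 hP hΔ.neg
  set ρ := 1 - a⁻¹
  have hρ : ρ ∈ Set.Ico 0 1 := ⟨sub_nonneg.2 (inv_le_one_of_one_le₀ ha),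
    sub_lt_self 1 (inv_pos.2 (zero_lt_one.trans_le ha))⟩
  have hTP : T P ≤ ρ • P := by
    have : a⁻¹ • P ≤ S := by
      simpa [smul_smul, inv_mul_cancel₀ (zero_lt_one.trans_le ha).ne'] using
        smul_le_smul_of_nonneg_left hPa (inv_nonneg.2 (zero_le_one.trans ha))
    rw [sub_smul, one_smul]
    calc T P = P - S := eq_sub_of_add_eq hPS.symm
      _ ≤ P - a⁻¹ • P := sub_le_sub_left this P
  have hTPN : ∀ N, T^[N] P ≤ ρ ^ N • P := by
    intro N
    induction N with
    | zero => simp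
    | succ N ih =>
      rw [Function.iterate_succ_apply', pow_succ, ← smul_smul]
      calc T (T^[N] P) ≤ T (ρ ^ N • P) := hT ih
        _ = ρ ^ N • T P := map_smul T _ _
        _ ≤ ρ ^ N • ρ • P := smul_le_smul_of_nonneg_left hTP (pow_nonneg hρ.1 N)
  have hTΔ : ∀ N, T^[N] Δ ≤ Δ := by
    intro N
    induction N with
    | zero => exact le_rfl
    | succ N ih =>
      rw [Function.iterate_succ_apply]
      exact ((hT.iterate N) (le_of_add_le_of_nonneg_left hΔW.ge hW)).trans ih
  have hlow : ∀ N, 0 ≤ Δ + (c * ρ ^ N) • P := by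
    intro N
    have hTN := hT.iterate N hΔc
    rw [← Module.End.pow_apply, ← Module.End.pow_apply, map_neg, map_smul, Module.End.pow_apply,
      Module.End.pow_apply] at hTN
    refine neg_le_iff_add_nonneg'.1 ?_
    calc -Δ ≤ -T^[N] Δ := neg_le_neg (hTΔ N)
      _ ≤ c • T^[N] P := hTN
      _ ≤ c • ρ ^ N • P := smul_le_smul_of_nonneg_left (hTPN N) (zero_le_one.trans hc)
      _ = (c * ρ ^ N) • P := smul_smul _ _ _
  have hlim : Tendsto (fun N => Δ + (c * ρ ^ N) • P) atTop (𝓝 Δ) := by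
    simpa using tendsto_const_nhds.add
      (((tendsto_pow_atTop_nhds_zero_of_lt_one hρ.1 hρ.2).const_mul c).smul_const P)
  exact isClosed_setOf_nonneg.mem_of_tendsto hlim (Eventually.of_forall hlow)

end Matrix

/-- The system `x' = A x + B u + (C x + D u) w` with stage cost `xᵀ Q x + uᵀ R u` and discount
`γ`. For a kernel `P`, `Hxx`, `Hxu`, `Hux`, `Huu` are the blocks of its Q-function kernel,
`bellman L P` is the right-hand side of the policy-evaluation equation of the gain `L`, and
`greedy P` is the improved gain. -/
structure LQSystem (ι κ : Type*) where
  A : Matrix ι ι ℝ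
  C : Matrix ι ι ℝ
  B : Matrix ι κ ℝ
  D : Matrix ι κ ℝ
  Q : Matrix ι ι ℝ
  R : Matrix κ κ ℝ
  γ : ℝ

noncomputable section

namespace LQSystem

variable {ι κ : Type*} [Fintype ι] (S : LQSystem ι κ)

def Hxx (P : Matrix ι ι ℝ) : Matrix ι ι ℝ :=
  S.Q + S.γ • (S.Aᵀ * P * S.A) + S.γ • (S.Cᵀ * P * S.C)

def Hux (P : Matrix ι ι ℝ) : Matrix κ ι ℝ :=
  S.γ • (S.Bᵀ * P * S.A) + S.γ • (S.Dᵀ * P * S.C)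

def Huu (P : Matrix ι ι ℝ) : Matrix κ κ ℝ :=
  S.R + S.γ • (S.Bᵀ * P * S.B) + S.γ • (S.Dᵀ * P * S.D)

def Hxu (P : Matrix ι ι ℝ) : Matrix ι κ ℝ :=
  S.γ • (S.Aᵀ * P * S.B + S.Cᵀ * P * S.D)

def qKernel (P : Matrix ι ι ℝ) : Matrix (ι ⊕ κ) (ι ⊕ κ) ℝ :=
  fromBlocks (S.Hxx P) (S.Hxu P) (S.Hxu P)ᵀ (S.Huu P)

lemma continuous_qKernel : Continuous S.qKernel := by
  unfold qKernel Hxx Hxu Huu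
  fun_prop

variable {S} in
lemma Hux_eq_transpose {P : Matrix ι ι ℝ} (hP : P.IsSymm) : S.Hux P = (S.Hxu P)ᵀ := by
  simp only [Hux, Hxu, transpose_add, transpose_smul, transpose_mul, transpose_transpose, hP.eq,
    smul_add, Matrix.mul_assoc]

variable [Fintype κ]

def closedLoop (L : Matrix κ ι ℝ) : Module.End ℝ (Matrix ι ι ℝ) where
  toFun X := S.γ • ((S.A + S.B * L)ᵀ * X * (S.A + S.B * L)) +
    S.γ • ((S.C + S.D * L)ᵀ * X * (S.C + S.D * L))
  map_add' X Y := by simp only [Matrix.mul_add, Matrix.add_mul, smul_add]; abel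
  map_smul' a X := by
    simp only [Matrix.mul_smul, Matrix.smul_mul, smul_add, RingHom.id_apply, smul_comm S.γ a]

def bellman (L : Matrix κ ι ℝ) (P : Matrix ι ι ℝ) : Matrix ι ι ℝ :=
  S.closedLoop L P + Lᵀ * S.R * L + S.Q

variable {S}

lemma closedLoop_monotone (hγ : 0 ≤ S.γ) (L : Matrix κ ι ℝ) : Monotone (S.closedLoop L) := by
  intro X Y hXY
  rw [le_iff, ← map_sub]
  exact (((le_iff.1 hXY).transpose_mul_mul_same_s17 _).smul hγ).add
    (((le_iff.1 hXY).transpose_mul_mul_same_s17 _).smul hγ)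

lemma posDef_Huu (hγ : 0 ≤ S.γ) (hR : S.R.PosDef) {P : Matrix ι ι ℝ} (hP : 0 ≤ P) :
    (S.Huu P).PosDef :=
  (hR.add_posSemidef ((hP.posSemidef.transpose_mul_mul_same_s17 _).smul hγ)).add_posSemidef
    ((hP.posSemidef.transpose_mul_mul_same_s17 _).smul hγ)

lemma posDef_bellman (hγ : 0 ≤ S.γ) (hQ : S.Q.PosDef) (hR : 0 ≤ S.R) {P : Matrix ι ι ℝ}
    (hP : 0 ≤ P) (L : Matrix κ ι ℝ) : (S.bellman L P).PosDef :=
  PosDef.posSemidef_add ((by simpa using closedLoop_monotone hγ L hP : 0 ≤ S.closedLoop L P)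
    |>.posSemidef.add (hR.posSemidef.transpose_mul_mul_same_s17 L)) hQ

lemma bellman_eq {P : Matrix ι ι ℝ} (hP : P.IsSymm) (L : Matrix κ ι ℝ) :
    S.bellman L P = S.Hxx P + (S.Hux P)ᵀ * L + Lᵀ * S.Hux P + Lᵀ * (S.Huu P * L) := by
  simp only [bellman, closedLoop, LinearMap.coe_mk, AddHom.coe_mk, Hxx, Hux, Huu, transpose_add,
    transpose_mul, transpose_smul, transpose_transpose, hP.eq, Matrix.add_mul, Matrix.mul_add,
    Matrix.smul_mul, Matrix.mul_smul, smul_add, Matrix.mul_assoc]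
  abel

lemma bellman_eq_bellman_add {P : Matrix ι ι ℝ} (hP : P.IsSymm) (hR : S.R.IsSymm)
    {K : Matrix κ ι ℝ} (hK : S.Huu P * K = -S.Hux P) (L : Matrix κ ι ℝ) :
    S.bellman L P = S.bellman K P + (L - K)ᵀ * S.Huu P * (L - K) := by
  have hH : (S.Huu P)ᵀ = S.Huu P := by
    simp only [Huu, transpose_add, transpose_smul, transpose_mul, transpose_transpose, hP.eq,
      hR.eq, Matrix.mul_assoc]
  have hux : S.Hux P = -(S.Huu P * K) := by rw [hK, neg_neg]
  have huxt : (S.Hux P)ᵀ = -(Kᵀ * S.Huu P) := by rw [hux, transpose_neg, transpose_mul, hH]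
  rw [bellman_eq hP, bellman_eq hP, huxt, hux]
  simp only [transpose_sub, Matrix.sub_mul, Matrix.mul_sub, Matrix.neg_mul, Matrix.mul_neg,
    Matrix.mul_assoc]
  abel

lemma continuous_bellman :
    Continuous fun p : Matrix κ ι ℝ × Matrix ι ι ℝ => S.bellman p.1 p.2 := by
  simp only [bellman, closedLoop, LinearMap.coe_mk, AddHom.coe_mk]
  fun_prop

variable [DecidableEq κ]

variable (S) in
def greedy (P : Matrix ι ι ℝ) : Matrix κ ι ℝ := -((S.Huu P)⁻¹ * S.Hux P)

variable (S) in
def riccati (P : Matrix ι ι ℝ) : Matrix ι ι ℝ :=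
  S.Hxx P - (S.γ • (S.Aᵀ * P * S.B) + S.γ • (S.Cᵀ * P * S.D)) * (S.Huu P)⁻¹ * S.Hux P

lemma Huu_mul_greedy {P : Matrix ι ι ℝ} (h : IsUnit (S.Huu P).det) :
    S.Huu P * S.greedy P = -S.Hux P := by
  rw [greedy, Matrix.mul_neg, ← Matrix.mul_assoc, mul_nonsing_inv _ h, Matrix.one_mul]

lemma bellman_greedy {P : Matrix ι ι ℝ} (hP : P.IsSymm) (h : IsUnit (S.Huu P).det) :
    S.bellman (S.greedy P) P = S.riccati P := by
  have hHux : (S.Hux P)ᵀ = S.Hxu P := by rw [Hux_eq_transpose hP, transpose_transpose]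
  rw [bellman_eq hP, Huu_mul_greedy h, riccati, ← smul_add, ← Hxu, ← hHux, greedy]
  simp only [Matrix.mul_neg, Matrix.mul_assoc]
  abel

lemma continuousAt_greedy {P : Matrix ι ι ℝ} (h : (S.Huu P).det ≠ 0) :
    ContinuousAt S.greedy P := by
  have hinv : ContinuousAt Inv.inv (S.Huu P) :=
    continuousAt_matrix_inv _ (by rw [Ring.inverse_eq_inv']; exact continuousAt_inv₀ h)
  have hHuu : Continuous S.Huu := by unfold Huu; fun_prop
  have hHux : Continuous S.Hux := by unfold Hux; fun_prop
  exact ((continuous_fst.matrix_mul continuous_snd).continuousAt.comp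
    ((hinv.comp hHuu.continuousAt).prodMk hHux.continuousAt)).neg

variable [DecidableEq ι]

lemma le_of_bellman_greedy (hγ : 0 ≤ S.γ) (hQ : S.Q.PosDef) (hR : S.R.PosDef)
    {P P' : Matrix ι ι ℝ} {L : Matrix κ ι ℝ} (hP : 0 ≤ P) (hP' : P'.PosDef)
    (hPL : P = S.bellman L P) (hP'K : P' = S.bellman (S.greedy P) P') : P' ≤ P := by
  set K := S.greedy P
  have hHuu := posDef_Huu hγ hR hP
  have hPsymm : P.IsSymm := isHermitian_iff_isSymm.1 hP.posSemidef.isHermitian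
  have hcost := bellman_eq_bellman_add hPsymm (isHermitian_iff_isSymm.1 hR.isHermitian)
    (Huu_mul_greedy hHuu.det_pos.ne'.isUnit) L
  have hS : (Kᵀ * S.R * K + S.Q).PosDef :=
    PosDef.posSemidef_add (hR.posSemidef.transpose_mul_mul_same_s17 K) hQ
  refine le_iff.2 <| nonneg_iff_posSemidef.1 <| nonneg_of_eq_map_add (closedLoop_monotone hγ K)
    hP' hS (hP'K.trans (add_assoc _ _ _)) (hP.posSemidef.isHermitian.sub hP'.isHermitian)
    (hHuu.posSemidef.transpose_mul_mul_same_s17 (L - K)).nonneg ?_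
  calc P - P' = S.bellman L P - S.bellman K P' := by rw [← hPL, ← hP'K]
    _ = S.closedLoop K (P - P') + (L - K)ᵀ * S.Huu P * (L - K) := by
      rw [hcost, map_sub]
      simp only [bellman]
      abel

theorem exists_tendsto_of_policyIteration (hγ : 0 ≤ S.γ) (hQ : S.Q.PosDef) (hR : S.R.PosDef)
    {P : ℕ → Matrix ι ι ℝ} {L : ℕ → Matrix κ ι ℝ} (hP : ∀ i, (P i).PosDef)
    (hPL : ∀ i, P i = S.bellman (L i) (P i)) (hL : ∀ i, L (i + 1) = S.greedy (P i)) :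
    ∃ X : Matrix ι ι ℝ, X.PosDef ∧ X = S.riccati X ∧
      Tendsto P atTop (𝓝 X) ∧ Tendsto L atTop (𝓝 (S.greedy X)) := by
  have hP0 : ∀ i, 0 ≤ P i := fun i => (hP i).posSemidef.nonneg
  have hanti : Antitone P := antitone_nat_of_succ_le fun i =>
    le_of_bellman_greedy hγ hQ hR (hP0 i) (hP (i + 1)) (hPL i) (hL i ▸ hPL (i + 1))
  obtain ⟨X, hPX⟩ := exists_tendsto_of_antitone_s17 hanti hP0
  have hX0 : 0 ≤ X := isClosed_setOf_nonneg.mem_of_tendsto hPX (Eventually.of_forall hP0)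
  have hXdet : IsUnit (S.Huu X).det := (posDef_Huu hγ hR hX0).det_pos.ne'.isUnit
  have hLX : Tendsto L atTop (𝓝 (S.greedy X)) := by
    rw [← tendsto_add_atTop_iff_nat 1]
    simp_rw [hL]
    exact (continuousAt_greedy hXdet.ne_zero).tendsto.comp hPX
  have hXfix : X = S.bellman (S.greedy X) X := by
    refine tendsto_nhds_unique hPX ?_
    refine ((continuous_bellman.tendsto _).comp (hLX.prodMk_nhds hPX)).congr fun i => ?_
    exact (hPL i).symm
  refine ⟨X, ?_, ?_, hPX, hLX⟩
  · rw [hXfix]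
    exact posDef_bellman hγ hQ hR.posSemidef.nonneg hX0 _
  · rw [← bellman_greedy (isHermitian_iff_isSymm.1 hX0.posSemidef.isHermitian) hXdet]
    exact hXfix

end LQSystem

end

theorem stmt17_general {n m : ℕ} (A C : Matrix (Fin n) (Fin n) ℝ)
    (B D : Matrix (Fin n) (Fin m) ℝ)
    (Q : Matrix (Fin n) (Fin n) ℝ) (R : Matrix (Fin m) (Fin m) ℝ) (γ : ℝ)
    (hQ : Q.PosDef) (hR : R.PosDef) (hγ0 : 0 ≤ γ)
    (L : ℕ → Matrix (Fin m) (Fin n) ℝ) (P : ℕ → Matrix (Fin n) (Fin n) ℝ)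
    (hPpd : ∀ i, (P i).PosDef)
    (hsle : ∀ i, P i = γ • ((A + B * L i)ᵀ * P i * (A + B * L i)) +
      γ • ((C + D * L i)ᵀ * P i * (C + D * L i)) + (L i)ᵀ * R * (L i) + Q)
    (hupd : ∀ i, L (i + 1) = -((R + γ • (Bᵀ * P i * B) + γ • (Dᵀ * P i * D))⁻¹ *
      (γ • (Bᵀ * P i * A) + γ • (Dᵀ * P i * C))))
    (H : ℕ → Matrix (Fin n ⊕ Fin m) (Fin n ⊕ Fin m) ℝ)
    (hH : ∀ i, H i = Matrix.fromBlocks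
      (Q + γ • (Aᵀ * P i * A) + γ • (Cᵀ * P i * C))
      (γ • (Aᵀ * P i * B + Cᵀ * P i * D))
      ((γ • (Aᵀ * P i * B + Cᵀ * P i * D))ᵀ)
      (R + γ • (Bᵀ * P i * B) + γ • (Dᵀ * P i * D)))
    (Pstar : Matrix (Fin n) (Fin n) ℝ)
    (huniq : ∀ P' : Matrix (Fin n) (Fin n) ℝ, P'.PosDef →
      P' = Q + γ • (Aᵀ * P' * A) + γ • (Cᵀ * P' * C) -
        (γ • (Aᵀ * P' * B) + γ • (Cᵀ * P' * D)) *
          (R + γ • (Bᵀ * P' * B) + γ • (Dᵀ * P' * D))⁻¹ *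
          (γ • (Bᵀ * P' * A) + γ • (Dᵀ * P' * C)) → P' = Pstar)
    (Hstar : Matrix (Fin n ⊕ Fin m) (Fin n ⊕ Fin m) ℝ)
    (hHstar : Hstar = Matrix.fromBlocks
      (Q + γ • (Aᵀ * Pstar * A) + γ • (Cᵀ * Pstar * C))
      (γ • (Aᵀ * Pstar * B + Cᵀ * Pstar * D))
      ((γ • (Aᵀ * Pstar * B + Cᵀ * Pstar * D))ᵀ)
      (R + γ • (Bᵀ * Pstar * B) + γ • (Dᵀ * Pstar * D)))
    (Lstar : Matrix (Fin m) (Fin n) ℝ)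
    (hLstar : Lstar = -((R + γ • (Bᵀ * Pstar * B) + γ • (Dᵀ * Pstar * D))⁻¹ *
      (γ • (Aᵀ * Pstar * B + Cᵀ * Pstar * D))ᵀ)) :
    Tendsto H atTop (𝓝 Hstar) ∧ Tendsto L atTop (𝓝 Lstar) := by
  let S : LQSystem (Fin n) (Fin m) := ⟨A, C, B, D, Q, R, γ⟩
  obtain ⟨X, hXpd, hXric, hPX, hLX⟩ :=
    S.exists_tendsto_of_policyIteration hγ0 hQ hR hPpd hsle hupd
  obtain rfl : X = Pstar := huniq X hXpd hXric
  rw [LQSystem.greedy, LQSystem.Hux_eq_transpose (isHermitian_iff_isSymm.1 hXpd.isHermitian)]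
    at hLX
  rw [funext hH, hHstar, hLstar]
  exact ⟨(S.continuous_qKernel.tendsto X).comp hPX, hLX⟩

theorem stmt17 {n m : ℕ} (A C : Matrix (Fin n) (Fin n) ℝ)
    (B D : Matrix (Fin n) (Fin m) ℝ)
    (Q : Matrix (Fin n) (Fin n) ℝ) (R : Matrix (Fin m) (Fin m) ℝ) (γ : ℝ)
    (hQ : Q.PosDef) (hR : R.PosDef) (hγ0 : 0 ≤ γ) (hγ1 : γ < 1)
    (L : ℕ → Matrix (Fin m) (Fin n) ℝ) (P : ℕ → Matrix (Fin n) (Fin n) ℝ)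
    (hPpd : ∀ i, (P i).PosDef)
    (hsle : ∀ i, P i = γ • ((A + B * L i)ᵀ * P i * (A + B * L i)) +
      γ • ((C + D * L i)ᵀ * P i * (C + D * L i)) + (L i)ᵀ * R * (L i) + Q)
    (hupd : ∀ i, L (i + 1) = -((R + γ • (Bᵀ * P i * B) + γ • (Dᵀ * P i * D))⁻¹ *
      (γ • (Bᵀ * P i * A) + γ • (Dᵀ * P i * C))))
    (H : ℕ → Matrix (Fin n ⊕ Fin m) (Fin n ⊕ Fin m) ℝ)
    (hH : ∀ i, H i = Matrix.fromBlocks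
      (Q + γ • (Aᵀ * P i * A) + γ • (Cᵀ * P i * C))
      (γ • (Aᵀ * P i * B + Cᵀ * P i * D))
      ((γ • (Aᵀ * P i * B + Cᵀ * P i * D))ᵀ)
      (R + γ • (Bᵀ * P i * B) + γ • (Dᵀ * P i * D)))
    (Pstar : Matrix (Fin n) (Fin n) ℝ) (hPstar : Pstar.PosDef)
    (hsare : Pstar = Q + γ • (Aᵀ * Pstar * A) + γ • (Cᵀ * Pstar * C) -
      (γ • (Aᵀ * Pstar * B) + γ • (Cᵀ * Pstar * D)) *
        (R + γ • (Bᵀ * Pstar * B) + γ • (Dᵀ * Pstar * D))⁻¹ *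
        (γ • (Bᵀ * Pstar * A) + γ • (Dᵀ * Pstar * C)))
    (huniq : ∀ P' : Matrix (Fin n) (Fin n) ℝ, P'.PosDef →
      P' = Q + γ • (Aᵀ * P' * A) + γ • (Cᵀ * P' * C) -
        (γ • (Aᵀ * P' * B) + γ • (Cᵀ * P' * D)) *
          (R + γ • (Bᵀ * P' * B) + γ • (Dᵀ * P' * D))⁻¹ *
          (γ • (Bᵀ * P' * A) + γ • (Dᵀ * P' * C)) → P' = Pstar)
    (Hstar : Matrix (Fin n ⊕ Fin m) (Fin n ⊕ Fin m) ℝ)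
    (hHstar : Hstar = Matrix.fromBlocks
      (Q + γ • (Aᵀ * Pstar * A) + γ • (Cᵀ * Pstar * C))
      (γ • (Aᵀ * Pstar * B + Cᵀ * Pstar * D))
      ((γ • (Aᵀ * Pstar * B + Cᵀ * Pstar * D))ᵀ)
      (R + γ • (Bᵀ * Pstar * B) + γ • (Dᵀ * Pstar * D)))
    (Lstar : Matrix (Fin m) (Fin n) ℝ)
    (hLstar : Lstar = -((R + γ • (Bᵀ * Pstar * B) + γ • (Dᵀ * Pstar * D))⁻¹ *
      (γ • (Aᵀ * Pstar * B + Cᵀ * Pstar * D))ᵀ)) :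
    Tendsto H atTop (𝓝 Hstar) ∧ Tendsto L atTop (𝓝 Lstar) :=
  stmt17_general A C B D Q R γ hQ hR hγ0 L P hPpd hsle hupd H hH Pstar huniq Hstar hHstar Lstar
    hLstar
end
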